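/- arXiv:2509.05533 — 8 statements merged into one kernel-verified Lean document; each statement's English description precedes it below -/
import Mathlib

section
/- Let 0 < α < 1 and let v : (0,1] → ℝ be continuously differentiable on (0,1] with ‖v‖²_{H¹_α} := ∫₀¹ v(x)² dx + ∫₀¹ x^α v'(x)² dx < ∞. Then for every x ∈ (0,1], |v(x)| ≤ (1/√(1−α) + √2) · ‖v‖_{H¹_α}; consequently v extends to a continuous function on [0,1] and the space H¹_α(0,1) embeds continuously into C([0,1]). -/
/-! For `0 < y ≤ x ≤ δ ≤ 1`, the fundamental theorem of calculus and Cauchy–Schwarz applied to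
`|v'| = t^{-α/2} · (t^{α/2} |v'|)` give
`|v x - v y|² ≤ (∫_y^x t^{-α} dt) · ∫₀¹ t^α v'² ≤ δ^{1-α}/(1-α) · ∫₀¹ t^α v'²`,
where `α < 1` makes `t^{-α}` integrable at `0`. Taking `δ = 1` and a point `y` with
`v y² ≤ ∫₀¹ v²` (the minimum of a function lies below its mean) gives the pointwise bound;
letting `δ → 0` shows that `v` is Cauchy at `0⁺`, so it has a limit there and extends
continuously to `[0,1]`. -/

open MeasureTheory Set Filter Topology

theorem integral_mul_le_sqrt_mul_sqrt {X : Type*} [MeasurableSpace X] {μ : Measure X}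
    {f g : X → ℝ} (hf : 0 ≤ᵐ[μ] f) (hg : 0 ≤ᵐ[μ] g) (hf2 : MemLp f 2 μ) (hg2 : MemLp g 2 μ) :
    ∫ x, f x * g x ∂μ ≤ √(∫ x, f x ^ 2 ∂μ) * √(∫ x, g x ^ 2 ∂μ) := by
  have h := integral_mul_le_Lp_mul_Lq_of_nonneg Real.HolderConjugate.two_two hf hg
    (by simpa using hf2) (by simpa using hg2)
  simpa only [Real.rpow_two, ← Real.sqrt_eq_rpow] using h

theorem ContinuousOn.memLp_two_restrict_Ioc {f : ℝ → ℝ} {a b : ℝ}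
    (hf : ContinuousOn f (Icc a b)) : MemLp f 2 (volume.restrict (Ioc a b)) :=
  (memLp_two_iff_integrable_sq
    ((hf.mono Ioc_subset_Icc_self).aestronglyMeasurable measurableSet_Ioc)).2
    ((hf.pow 2).integrableOn_Icc.mono_set Ioc_subset_Icc_self)

theorem integral_Ioc_rpow_neg {α a b : ℝ} (hα : α < 1) (hab : a ≤ b) :
    ∫ t in Ioc a b, t ^ (-α) = (b ^ (1 - α) - a ^ (1 - α)) / (1 - α) := by
  rw [← intervalIntegral.integral_of_le hab, integral_rpow (Or.inl (by linarith)),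
    neg_add_eq_sub]

theorem integral_Ioc_abs_le_sqrt_mul_sqrt {α a b : ℝ} {f : ℝ → ℝ} (ha : 0 < a)
    (hf : ContinuousOn f (Icc a b)) :
    ∫ t in Ioc a b, |f t| ≤
      √(∫ t in Ioc a b, t ^ (-α)) * √(∫ t in Ioc a b, t ^ α * f t ^ 2) := by
  have hpos : ∀ t ∈ Icc a b, 0 < t := fun t ht => ha.trans_le ht.1
  have hrpow : ∀ β : ℝ, ContinuousOn (fun t : ℝ => t ^ β) (Icc a b) := fun β t ht =>
    (Real.continuousAt_rpow_const t β (Or.inl (hpos t ht).ne')).continuousWithinAt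
  have hae : ∀ᵐ t ∂volume.restrict (Ioc a b), 0 < t :=
    ae_restrict_of_forall_mem measurableSet_Ioc fun t ht => hpos t (Ioc_subset_Icc_self ht)
  have key := integral_mul_le_sqrt_mul_sqrt (μ := volume.restrict (Ioc a b))
    (f := fun t => t ^ (-(α / 2))) (g := fun t => t ^ (α / 2) * |f t|)
    (hae.mono fun t ht => (Real.rpow_pos_of_pos ht _).le)
    (hae.mono fun t ht => mul_nonneg (Real.rpow_pos_of_pos ht _).le (abs_nonneg _))
    (hrpow _).memLp_two_restrict_Ioc ((hrpow _).mul hf.abs).memLp_two_restrict_Ioc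
  have e1 : ∫ t in Ioc a b, |f t| = ∫ t in Ioc a b, t ^ (-(α / 2)) * (t ^ (α / 2) * |f t|) :=
    integral_congr_ae <| hae.mono fun t ht => by
      simp only [← mul_assoc, ← Real.rpow_add ht, neg_add_cancel, Real.rpow_zero, one_mul]
  have e2 : ∫ t in Ioc a b, (t ^ (-(α / 2))) ^ 2 = ∫ t in Ioc a b, t ^ (-α) :=
    integral_congr_ae <| hae.mono fun t ht => by
      simp only [← Real.rpow_natCast, ← Real.rpow_mul ht.le]
      ring_nf
  have e3 : ∫ t in Ioc a b, (t ^ (α / 2) * |f t|) ^ 2 = ∫ t in Ioc a b, t ^ α * f t ^ 2 :=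
    integral_congr_ae <| hae.mono fun t ht => by
      simp only [mul_pow, sq_abs, ← Real.rpow_natCast, ← Real.rpow_mul ht.le]
      ring_nf
  rwa [e1, ← e2, ← e3]

theorem abs_sub_le_integral_abs_of_hasDerivWithinAt {f f' : ℝ → ℝ} {a b : ℝ} (hab : a ≤ b)
    (hf : ∀ t ∈ Icc a b, HasDerivWithinAt f (f' t) (Icc a b) t)
    (hf' : ContinuousOn f' (Icc a b)) :
    |f b - f a| ≤ ∫ t in Ioc a b, |f' t| := by
  have hftc : ∫ t in a..b, f' t = f b - f a :=
    intervalIntegral.integral_eq_sub_of_hasDerivAt_of_le hab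
      (fun t ht => (hf t ht).continuousWithinAt)
      (fun t ht => (hf t (Ioo_subset_Icc_self ht)).hasDerivAt (Icc_mem_nhds ht.1 ht.2))
      (hf'.intervalIntegrable_of_Icc hab)
  rw [← hftc, ← intervalIntegral.integral_of_le hab]
  exact intervalIntegral.abs_integral_le_integral_abs hab

theorem exists_tendsto_nhdsGT_of_dist_le {E : Type*} [PseudoMetricSpace E] [CompleteSpace E]
    {f : ℝ → E} {g : ℝ → ℝ} {a : ℝ} (hg : Tendsto g (𝓝[>] a) (𝓝 0))
    (hf : ∀ᶠ δ in 𝓝[>] a, ∀ x ∈ Ioc a δ, ∀ y ∈ Ioc a δ, dist (f x) (f y) ≤ g δ) :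
    ∃ L, Tendsto f (𝓝[>] a) (𝓝 L) := by
  refine cauchy_map_iff_exists_tendsto.1 (Metric.cauchy_iff.2 ⟨map_neBot, fun ε hε => ?_⟩)
  obtain ⟨δ, hδ, hfδ, hgδ⟩ :=
    (eventually_mem_nhdsWithin.and (hf.and (hg.eventually (gt_mem_nhds hε)))).exists
  exact ⟨f '' Ioc a δ, image_mem_map (Ioc_mem_nhdsGT hδ), by
    rintro _ ⟨x, hx, rfl⟩ _ ⟨y, hy, rfl⟩
    exact (hfδ x hx y hy).trans_lt hgδ⟩

theorem exists_mem_Ioc_zero_one_le_integral {g : ℝ → ℝ} (hg : IntegrableOn g (Ioc 0 1)) :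
    ∃ y ∈ Ioc (0:ℝ) 1, g y ≤ ∫ t in Ioc (0:ℝ) 1, g t := by
  simpa [setAverage_eq] using exists_le_setAverage (by simp) (by simp) hg

noncomputable def weightedSobolevNorm (α : ℝ) (v v' : ℝ → ℝ) : ℝ :=
  √((∫ x in Ioc (0:ℝ) 1, v x ^ 2) + ∫ x in Ioc (0:ℝ) 1, x ^ α * v' x ^ 2)

namespace WeightedSobolev

variable {α : ℝ} {v v' : ℝ → ℝ}
  (hderiv : ∀ x ∈ Ioc (0:ℝ) 1, HasDerivWithinAt v (v' x) (Ioc (0:ℝ) 1) x)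
  (hcont : ContinuousOn v' (Ioc (0:ℝ) 1))
  (hint2 : IntegrableOn (fun x => x ^ α * v' x ^ 2) (Ioc (0:ℝ) 1))

include hderiv hcont hint2

theorem abs_sub_le_of_mem_Ioc (hα : α < 1) {δ x y : ℝ} (hδ : δ ≤ 1)
    (hx : x ∈ Ioc 0 δ) (hy : y ∈ Ioc 0 δ) :
    |v x - v y| ≤ √(δ ^ (1 - α) / (1 - α)) * √(∫ t in Ioc (0:ℝ) 1, t ^ α * v' t ^ 2) := by
  wlog hyx : y ≤ x generalizing x y
  · rw [abs_sub_comm]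
    exact this hy hx (le_of_not_ge hyx)
  have hsub : Icc y x ⊆ Ioc 0 1 := fun t ht => ⟨hy.1.trans_le ht.1, ht.2.trans (hx.2.trans hδ)⟩
  calc |v x - v y| ≤ ∫ t in Ioc y x, |v' t| :=
        abs_sub_le_integral_abs_of_hasDerivWithinAt hyx
          (fun t ht => (hderiv t (hsub ht)).mono hsub) (hcont.mono hsub)
    _ ≤ √(∫ t in Ioc y x, t ^ (-α)) * √(∫ t in Ioc y x, t ^ α * v' t ^ 2) :=
        integral_Ioc_abs_le_sqrt_mul_sqrt hy.1 (hcont.mono hsub)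
    _ ≤ _ := by
        refine mul_le_mul (Real.sqrt_le_sqrt ?_) (Real.sqrt_le_sqrt ?_)
          (Real.sqrt_nonneg _) (Real.sqrt_nonneg _)
        · rw [integral_Ioc_rpow_neg hα hyx]
          have : x ^ (1 - α) ≤ δ ^ (1 - α) :=
            Real.rpow_le_rpow (hy.1.le.trans hyx) hx.2 (by linarith)
          have : 0 ≤ y ^ (1 - α) := Real.rpow_nonneg hy.1.le _
          exact div_le_div_of_nonneg_right (by linarith) (by linarith)
        · refine setIntegral_mono_set hint2 ?_ ?_
          · exact ae_restrict_of_forall_mem measurableSet_Ioc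
              fun t ht => mul_nonneg (Real.rpow_nonneg ht.1.le _) (sq_nonneg _)
          · exact (Ioc_subset_Ioc hy.1.le (hx.2.trans hδ)).eventuallyLE

theorem abs_le_weightedSobolevNorm (hα : α < 1)
    (hint1 : IntegrableOn (fun x => v x ^ 2) (Ioc (0:ℝ) 1)) {x : ℝ} (hx : x ∈ Ioc (0:ℝ) 1) :
    |v x| ≤ (1 / √(1 - α) + √2) * weightedSobolevNorm α v v' := by
  obtain ⟨y, hy, hvy⟩ := exists_mem_Ioc_zero_one_le_integral hint1
  have hI1 : 0 ≤ ∫ t in Ioc (0:ℝ) 1, v t ^ 2 :=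
    setIntegral_nonneg measurableSet_Ioc fun t _ => sq_nonneg _
  have hI2 : 0 ≤ ∫ t in Ioc (0:ℝ) 1, t ^ α * v' t ^ 2 :=
    setIntegral_nonneg measurableSet_Ioc fun t ht =>
      mul_nonneg (Real.rpow_nonneg ht.1.le _) (sq_nonneg _)
  have hvy : |v y| ≤ weightedSobolevNorm α v v' := by
    rw [← Real.sqrt_sq_eq_abs]
    exact Real.sqrt_le_sqrt (by linarith)
  have hosc : |v x - v y| ≤ 1 / √(1 - α) * weightedSobolevNorm α v v' := by
    have h := abs_sub_le_of_mem_Ioc hderiv hcont hint2 hα le_rfl hx hy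
    rw [Real.one_rpow, Real.sqrt_div' _ (by linarith : (0:ℝ) ≤ 1 - α), Real.sqrt_one] at h
    exact h.trans (by gcongr; exact Real.sqrt_le_sqrt (by linarith))
  have h2 : 1 ≤ √2 := Real.one_le_sqrt.2 one_le_two
  have hN : 0 ≤ weightedSobolevNorm α v v' := Real.sqrt_nonneg _
  calc |v x| ≤ |v y| + |v x - v y| := by linarith [abs_sub_abs_le_abs_sub (v x) (v y)]
    _ ≤ √2 * weightedSobolevNorm α v v' + 1 / √(1 - α) * weightedSobolevNorm α v v' := by
        gcongr
        nlinarith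
    _ = _ := by ring

theorem exists_tendsto_nhdsGT_zero (hα : α < 1) : ∃ L, Tendsto v (𝓝[>] 0) (𝓝 L) := by
  set I := ∫ t in Ioc (0:ℝ) 1, t ^ α * v' t ^ 2
  have hcont0 : ContinuousAt (fun δ : ℝ => √(δ ^ (1 - α) / (1 - α)) * √I) 0 :=
    (((Real.continuousAt_rpow_const 0 _ (Or.inr (by linarith))).div_const _).sqrt).mul_const _
  have hlim : Tendsto (fun δ : ℝ => √(δ ^ (1 - α) / (1 - α)) * √I) (𝓝[>] 0) (𝓝 0) := by
    have h := hcont0.tendsto.mono_left (nhdsWithin_le_nhds (s := Ioi 0))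
    rwa [Real.zero_rpow (by linarith), zero_div, Real.sqrt_zero, zero_mul] at h
  refine exists_tendsto_nhdsGT_of_dist_le hlim ?_
  filter_upwards [Ioc_mem_nhdsGT one_pos] with δ hδ x hx y hy
  exact abs_sub_le_of_mem_Ioc hderiv hcont hint2 hα hδ.2 hx hy

end WeightedSobolev

open WeightedSobolev

theorem stmt1_general (α : ℝ) (hα1 : α < 1)
    (v v' : ℝ → ℝ)
    (hderiv : ∀ x ∈ Ioc (0:ℝ) 1, HasDerivWithinAt v (v' x) (Ioc (0:ℝ) 1) x)
    (hcont : ContinuousOn v' (Ioc (0:ℝ) 1))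
    (hint1 : IntegrableOn (fun x => (v x) ^ 2) (Ioc (0:ℝ) 1))
    (hint2 : IntegrableOn (fun x => x ^ α * (v' x) ^ 2) (Ioc (0:ℝ) 1)) :
    (∀ x ∈ Ioc (0:ℝ) 1,
      |v x| ≤ (1 / Real.sqrt (1 - α) + Real.sqrt 2) *
        Real.sqrt ((∫ x in Ioc (0:ℝ) 1, (v x) ^ 2)
          + ∫ x in Ioc (0:ℝ) 1, x ^ α * (v' x) ^ 2)) ∧
    ∃ w : ℝ → ℝ, ContinuousOn w (Icc (0:ℝ) 1) ∧
      (∀ x ∈ Ioc (0:ℝ) 1, w x = v x) ∧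
      ∀ x ∈ Icc (0:ℝ) 1,
        |w x| ≤ (1 / Real.sqrt (1 - α) + Real.sqrt 2) *
          Real.sqrt ((∫ x in Ioc (0:ℝ) 1, (v x) ^ 2)
            + ∫ x in Ioc (0:ℝ) 1, x ^ α * (v' x) ^ 2) := by
  have hbound := fun x (hx : x ∈ Ioc (0:ℝ) 1) =>
    abs_le_weightedSobolevNorm hderiv hcont hint2 hα1 hint1 hx
  obtain ⟨L, hL⟩ := exists_tendsto_nhdsGT_zero hderiv hcont hint2 hα1
  refine ⟨hbound, Function.update v 0 L, ?_, fun x hx => Function.update_of_ne hx.1.ne' _ _, ?_⟩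
  · rw [continuousOn_update_iff, Icc_sdiff_left]
    exact ⟨fun x hx => (hderiv x hx).continuousWithinAt,
      fun _ => hL.mono_left (nhdsWithin_mono _ Ioc_subset_Ioi_self)⟩
  · rintro x ⟨hx0, hx1⟩
    rcases hx0.eq_or_lt with rfl | hx0
    · rw [Function.update_self]
      exact le_of_tendsto hL.abs <| eventually_of_mem (Ioc_mem_nhdsGT one_pos) hbound
    · rw [Function.update_of_ne hx0.ne']
      exact hbound x ⟨hx0, hx1⟩

/-- For `0 < α < 1` and `v` continuously differentiable on `(0,1]` with
finite weighted Sobolev norm `‖v‖²_{H¹_α} = ∫₀¹ v² + ∫₀¹ xᵅ v'²`, one has the pointwise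
bound `|v(x)| ≤ (1/√(1-α) + √2) ‖v‖_{H¹_α}` on `(0,1]`; consequently `v` extends to a
continuous function on `[0,1]` satisfying the same bound (continuous embedding
`H¹_α(0,1) ↪ C([0,1])`). -/
theorem stmt1 (α : ℝ) (hα0 : 0 < α) (hα1 : α < 1)
    (v v' : ℝ → ℝ)
    (hderiv : ∀ x ∈ Ioc (0:ℝ) 1, HasDerivWithinAt v (v' x) (Ioc (0:ℝ) 1) x)
    (hcont : ContinuousOn v' (Ioc (0:ℝ) 1))
    (hint1 : IntegrableOn (fun x => (v x) ^ 2) (Ioc (0:ℝ) 1))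
    (hint2 : IntegrableOn (fun x => x ^ α * (v' x) ^ 2) (Ioc (0:ℝ) 1)) :
    (∀ x ∈ Ioc (0:ℝ) 1,
      |v x| ≤ (1 / Real.sqrt (1 - α) + Real.sqrt 2) *
        Real.sqrt ((∫ x in Ioc (0:ℝ) 1, (v x) ^ 2)
          + ∫ x in Ioc (0:ℝ) 1, x ^ α * (v' x) ^ 2)) ∧
    ∃ w : ℝ → ℝ, ContinuousOn w (Icc (0:ℝ) 1) ∧
      (∀ x ∈ Ioc (0:ℝ) 1, w x = v x) ∧
      ∀ x ∈ Icc (0:ℝ) 1,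
        |w x| ≤ (1 / Real.sqrt (1 - α) + Real.sqrt 2) *
          Real.sqrt ((∫ x in Ioc (0:ℝ) 1, (v x) ^ 2)
            + ∫ x in Ioc (0:ℝ) 1, x ^ α * (v' x) ^ 2) :=
  stmt1_general α hα1 v v' hderiv hcont hint1 hint2
end

section
/- Let 0 < α̃ < 1, η ≥ 0, and let λ ∈ ℂ with λ ∉ (−∞, −η]. Then ∫_{−∞}^{+∞} |ξ|^{2α̃−1} / (λ + η + ξ²) dξ = (π / sin(α̃ π)) · (λ + η)^{α̃−1}, where (λ+η)^{α̃−1} denotes the principal branch of the complex power. -/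
/-!
For real `t > 0` the integral is computed directly: the substitutions `ξ² = u`, `u = t v` and
`v = x / (1 - x)` turn it into the Beta integral `B(a, 1 - a) = Γ(a) Γ(1 - a) = π / sin (π a)`.
Both sides are holomorphic in `z = λ + η` on the slit plane (for the left side, differentiate
under the integral sign, dominated by `|ξ|^(2a-1) / (1 + ξ²)`), so they agree there by the
identity theorem.
-/

open MeasureTheory Complex Set Filter Topology
open scoped Real

section RealIntegrals

variable {a : ℝ}

theorem integral_Ioo_rpow_mul_one_sub_rpow_neg (ha₀ : 0 < a) (ha₁ : a < 1) :
    ∫ x in Ioo (0 : ℝ) 1, x ^ (a - 1) * (1 - x) ^ (-a) = π / Real.sin (π * a) := by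
  have hbeta := Gamma_mul_Gamma_eq_betaIntegral (s := (a : ℂ)) (t := 1 - (a : ℂ))
    (by simpa using ha₀) (by simpa using ha₁)
  rw [add_sub_cancel, Gamma_one, one_mul, Gamma_mul_Gamma_one_sub, betaIntegral,
    intervalIntegral.integral_of_le zero_le_one, integral_Ioc_eq_integral_Ioo] at hbeta
  have hreal : ∫ x in Ioo (0 : ℝ) 1, (x : ℂ) ^ ((a : ℂ) - 1) * (1 - (x : ℂ)) ^ (1 - (a : ℂ) - 1)
      = ∫ x in Ioo (0 : ℝ) 1, ((x ^ (a - 1) * (1 - x) ^ (-a) : ℝ) : ℂ) := by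
    refine setIntegral_congr_fun measurableSet_Ioo fun x hx => ?_
    rw [ofReal_mul, ofReal_cpow hx.1.le, ofReal_cpow (by linarith [hx.2])]
    push_cast
    ring_nf
  rw [hreal, integral_complex_ofReal] at hbeta
  have hcast : ((π / Real.sin (π * a) : ℝ) : ℂ) = π / sin (π * a) := by push_cast; rfl
  exact_mod_cast (hcast.trans hbeta).symm

theorem integral_Ioi_rpow_div_one_add (ha₀ : 0 < a) (ha₁ : a < 1) :
    ∫ u in Ioi (0 : ℝ), u ^ (a - 1) / (1 + u) = π / Real.sin (π * a) := by
  have himage : (fun x : ℝ => x / (1 - x)) '' Ioo 0 1 = Ioi 0 := by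
    ext u
    simp only [mem_image, mem_Ioo, mem_Ioi]
    constructor
    · rintro ⟨x, ⟨hx₀, hx₁⟩, rfl⟩
      exact div_pos hx₀ (by linarith)
    · intro hu
      refine ⟨u / (1 + u), ⟨by positivity, by rw [div_lt_one (by positivity)]; linarith⟩, ?_⟩
      field_simp
      ring
  have hderiv : ∀ x ∈ Ioo (0 : ℝ) 1,
      HasDerivWithinAt (fun x : ℝ => x / (1 - x)) ((1 - x) ^ 2)⁻¹ (Ioo 0 1) x := by
    intro x hx
    have hne : 1 - x ≠ 0 := by linarith [hx.2]
    exact (((hasDerivAt_id x).div ((hasDerivAt_id x).const_sub 1) hne).congr_deriv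
      (by simp only [id]; ring)).hasDerivWithinAt
  have hinj : InjOn (fun x : ℝ => x / (1 - x)) (Ioo 0 1) := by
    intro x hx y hy hxy
    have : 1 - x ≠ 0 := by linarith [hx.2]
    have : 1 - y ≠ 0 := by linarith [hy.2]
    field_simp at hxy
    linarith
  rw [← himage, integral_image_eq_integral_abs_deriv_smul measurableSet_Ioo hderiv hinj,
    ← integral_Ioo_rpow_mul_one_sub_rpow_neg ha₀ ha₁]
  refine setIntegral_congr_fun measurableSet_Ioo fun x hx => ?_
  have hx₀ : 0 < x := hx.1
  have hx₁ : 0 < 1 - x := by linarith [hx.2]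
  have h1 : 1 + x / (1 - x) = (1 - x)⁻¹ := by field_simp; ring
  rw [smul_eq_mul, abs_of_pos (by positivity), h1, Real.div_rpow hx₀.le hx₁.le,
    Real.rpow_sub hx₁, Real.rpow_one, Real.rpow_neg hx₁.le]
  have : 0 < (1 - x) ^ a := Real.rpow_pos_of_pos hx₁ a
  field_simp

theorem integral_Ioi_rpow_div_add (ha₀ : 0 < a) (ha₁ : a < 1) {t : ℝ} (ht : 0 < t) :
    ∫ u in Ioi (0 : ℝ), u ^ (a - 1) / (t + u) = t ^ (a - 1) * (π / Real.sin (π * a)) := by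
  have hscale := integral_comp_mul_left_Ioi (fun u : ℝ => u ^ (a - 1) / (t + u)) 0 ht
  rw [mul_zero, smul_eq_mul] at hscale
  rw [← integral_Ioi_rpow_div_one_add ha₀ ha₁, ← integral_const_mul, ← mul_inv_cancel_left₀ ht.ne'
    (∫ u in Ioi (0 : ℝ), u ^ (a - 1) / (t + u)), ← hscale, ← integral_const_mul]
  refine setIntegral_congr_fun measurableSet_Ioi fun u (hu : 0 < u) => ?_
  rw [Real.mul_rpow ht.le hu.le, Real.rpow_sub_one ht.ne']
  field_simp

theorem integral_abs_rpow_div_add_sq (ha₀ : 0 < a) (ha₁ : a < 1) {t : ℝ} (ht : 0 < t) :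
    ∫ ξ : ℝ, |ξ| ^ (2 * a - 1) / (t + ξ ^ 2) = t ^ (a - 1) * (π / Real.sin (π * a)) := by
  rw [← integral_Ioi_rpow_div_add ha₀ ha₁ ht,
    ← integral_comp_rpow_Ioi_of_pos (g := fun u : ℝ => u ^ (a - 1) / (t + u)) two_pos]
  have heven : (fun ξ : ℝ => |ξ| ^ (2 * a - 1) / (t + ξ ^ 2))
      = fun ξ => (fun x : ℝ => x ^ (2 * a - 1) / (t + x ^ 2)) |ξ| := by
    simp only [sq_abs]
  rw [heven, integral_comp_abs (f := fun x : ℝ => x ^ (2 * a - 1) / (t + x ^ 2)),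
    ← integral_const_mul]
  refine setIntegral_congr_fun measurableSet_Ioi fun x (hx : 0 < x) => ?_
  rw [smul_eq_mul, ← Real.rpow_mul hx.le, Real.rpow_two, show (2 : ℝ) - 1 = 1 by norm_num,
    Real.rpow_one, show 2 * a - 1 = 2 * (a - 1) + 1 by ring, Real.rpow_add_one hx.ne']
  ring

theorem integral_ofReal_abs_rpow_div_add_sq (ha₀ : 0 < a) (ha₁ : a < 1) {t : ℝ}
    (ht : 0 < t) :
    ∫ ξ : ℝ, ((|ξ| ^ (2 * a - 1) : ℝ) : ℂ) / ((t : ℂ) + (ξ : ℂ) ^ 2)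
      = ((π : ℂ) / (Real.sin (a * π) : ℂ)) * (t : ℂ) ^ ((a : ℂ) - 1) := by
  have hcast : ∀ ξ : ℝ, ((|ξ| ^ (2 * a - 1) : ℝ) : ℂ) / ((t : ℂ) + (ξ : ℂ) ^ 2)
      = ((|ξ| ^ (2 * a - 1) / (t + ξ ^ 2) : ℝ) : ℂ) := fun ξ => by push_cast; rfl
  have hpow : (t : ℂ) ^ ((a : ℂ) - 1) = ((t ^ (a - 1) : ℝ) : ℂ) := by
    rw [ofReal_cpow ht.le]
    push_cast
    rfl
  simp_rw [hcast, integral_complex_ofReal, integral_abs_rpow_div_add_sq ha₀ ha₁ ht, hpow,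
    mul_comm a]
  push_cast
  ring

end RealIntegrals

-- `d (1 + x) = (1 + R) d + d (x - R)`: weigh the two bounds by `1 + R` and `d`.
theorem div_mul_one_add_le_of_le_of_sub_le {d R r x : ℝ} (hd : 0 < d) (hR : 0 ≤ R)
    (h₁ : d ≤ r) (h₂ : x - R ≤ r) : d / (1 + R + d) * (1 + x) ≤ r := by
  rw [div_mul_eq_mul_div, div_le_iff₀ (by positivity)]
  linarith [mul_le_mul_of_nonneg_left h₁ (by positivity : (0 : ℝ) ≤ 1 + R),
    mul_le_mul_of_nonneg_left h₂ hd.le]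

theorem norm_div_le_inv_mul_norm_div {𝕜 : Type*} [NormedField 𝕜] {p q w : 𝕜} {c : ℝ}
    (hc : 0 < c) (hq : q ≠ 0) (h : c * ‖q‖ ≤ ‖p‖) : ‖w / p‖ ≤ c⁻¹ * ‖w / q‖ := by
  have hq' : 0 < ‖q‖ := norm_pos_iff.mpr hq
  rw [norm_div, norm_div]
  calc ‖w‖ / ‖p‖ ≤ ‖w‖ / (c * ‖q‖) := div_le_div_of_nonneg_left (norm_nonneg w) (by positivity) h
    _ = c⁻¹ * (‖w‖ / ‖q‖) := by field_simp

theorem norm_div_sq_le_inv_sq_mul_norm_div {𝕜 : Type*} [NormedField 𝕜] {p q w : 𝕜} {c : ℝ}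
    (hc : 0 < c) (hq : 1 ≤ ‖q‖) (h : c * ‖q‖ ≤ ‖p‖) : ‖w / p ^ 2‖ ≤ (c ^ 2)⁻¹ * ‖w / q‖ := by
  have hq₀ : q ≠ 0 := norm_pos_iff.mp (one_pos.trans_le hq)
  have hsq : c ^ 2 * ‖q ^ 2‖ ≤ ‖p ^ 2‖ := by
    rw [norm_pow, norm_pow, ← mul_pow]
    exact pow_le_pow_left₀ (by positivity) h 2
  have hq_sq : 1 * ‖q‖ ≤ ‖q ^ 2‖ := by
    rw [one_mul, norm_pow]
    nlinarith
  calc ‖w / p ^ 2‖ ≤ (c ^ 2)⁻¹ * ‖w / q ^ 2‖ :=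
        norm_div_le_inv_mul_norm_div (by positivity) (pow_ne_zero 2 hq₀) hsq
    _ ≤ (c ^ 2)⁻¹ * ‖w / q‖ := by
        gcongr
        simpa using norm_div_le_inv_mul_norm_div one_pos hq₀ hq_sq (w := w)

namespace Complex

theorem exists_pos_mul_one_add_le_norm_add {z₀ : ℂ} (hz₀ : z₀ ∈ slitPlane) :
    ∃ c > 0, ∃ ε > 0, ∀ z ∈ Metric.ball z₀ ε, ∀ x : ℝ, 0 ≤ x → c * (1 + x) ≤ ‖z + x‖ := by
  set d := Metric.infDist z₀ slitPlaneᶜ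
  have hd : 0 < d := (isOpen_slitPlane.isClosed_compl.notMem_iff_infDist_pos
    ⟨0, zero_notMem_slitPlane⟩).mp (not_not.mpr hz₀)
  refine ⟨(d / 2) / (1 + (‖z₀‖ + d / 2) + d / 2), by positivity, d / 2, by positivity,
    fun z hz x hx => div_mul_one_add_le_of_le_of_sub_le (by positivity) (by positivity) ?_ ?_⟩
  all_goals rw [Metric.mem_ball, dist_eq_norm] at hz
  · have hxd : d ≤ ‖z₀ + x‖ := by
      have hx' : -(x : ℂ) ∈ slitPlaneᶜ := by
        rw [mem_compl_iff, neg_ofReal_mem_slitPlane, not_lt]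
        exact hx
      simpa [dist_eq_norm] using Metric.infDist_le_dist_of_mem (x := z₀) hx'
    have := norm_sub_norm_le (z₀ + x) (z + x)
    rw [add_sub_add_right_eq_sub, norm_sub_rev] at this
    linarith
  · have := norm_sub_norm_le (x : ℂ) (-z)
    rw [sub_neg_eq_add, add_comm, norm_neg, norm_real, Real.norm_of_nonneg hx] at this
    have := norm_le_norm_add_norm_sub' z z₀
    linarith

theorem norm_one_add_ofReal_sq (ξ : ℝ) : ‖1 + (ξ : ℂ) ^ 2‖ = 1 + ξ ^ 2 := by
  rw [← ofReal_pow, ← ofReal_one, ← ofReal_add, norm_real, Real.norm_of_nonneg (by positivity)]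

theorem exists_pos_mul_norm_one_add_sq_le_norm_add_sq {z₀ : ℂ} (hz₀ : z₀ ∈ slitPlane) :
    ∃ c > 0, ∃ ε > 0, ∀ z ∈ Metric.ball z₀ ε, ∀ ξ : ℝ,
      c * ‖1 + (ξ : ℂ) ^ 2‖ ≤ ‖z + (ξ : ℂ) ^ 2‖ := by
  obtain ⟨c, hc, ε, hε, hbound⟩ := exists_pos_mul_one_add_le_norm_add hz₀
  refine ⟨c, hc, ε, hε, fun z hz ξ => ?_⟩
  rw [norm_one_add_ofReal_sq]
  exact_mod_cast hbound z hz (ξ ^ 2) (sq_nonneg ξ)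

theorem differentiableOn_integral_div_add_sq {w : ℝ → ℂ}
    (hw : Integrable fun ξ : ℝ => w ξ / (1 + (ξ : ℂ) ^ 2)) :
    DifferentiableOn ℂ (fun z => ∫ ξ : ℝ, w ξ / (z + (ξ : ℂ) ^ 2)) slitPlane := by
  intro z₀ hz₀
  obtain ⟨c, hc, ε, hε, hden⟩ := exists_pos_mul_norm_one_add_sq_le_norm_add_sq hz₀
  have hq_one : ∀ ξ : ℝ, 1 ≤ ‖1 + (ξ : ℂ) ^ 2‖ := fun ξ => by
    rw [norm_one_add_ofReal_sq]
    nlinarith [sq_nonneg ξ]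
  have hq : ∀ ξ : ℝ, 1 + (ξ : ℂ) ^ 2 ≠ 0 := fun ξ => norm_pos_iff.mp (one_pos.trans_le (hq_one ξ))
  have hne : ∀ z ∈ Metric.ball z₀ ε, ∀ ξ : ℝ, z + (ξ : ℂ) ^ 2 ≠ 0 := fun z hz ξ =>
    norm_pos_iff.mp ((mul_pos hc (norm_pos_iff.mpr (hq ξ))).trans_le (hden z hz ξ))
  have hw_meas : AEStronglyMeasurable w := by
    have hcont : Continuous fun ξ : ℝ => 1 + (ξ : ℂ) ^ 2 := by fun_prop
    exact (hw.aestronglyMeasurable.mul hcont.aestronglyMeasurable).congr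
      (ae_of_all _ fun ξ => div_mul_cancel₀ _ (hq ξ))
  have hmeas : ∀ z : ℂ, AEStronglyMeasurable fun ξ : ℝ => w ξ / (z + (ξ : ℂ) ^ 2) := by
    intro z
    simp_rw [div_eq_mul_inv]
    exact hw_meas.mul (Measurable.aestronglyMeasurable (by fun_prop))
  have hmeas' : AEStronglyMeasurable fun ξ : ℝ => -w ξ / (z₀ + (ξ : ℂ) ^ 2) ^ 2 := by
    simp_rw [div_eq_mul_inv]
    exact hw_meas.neg.mul (Measurable.aestronglyMeasurable (by fun_prop))
  have hint : Integrable fun ξ : ℝ => w ξ / (z₀ + (ξ : ℂ) ^ 2) :=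
    (hw.norm.const_mul c⁻¹).mono' (hmeas z₀) (ae_of_all _ fun ξ =>
      norm_div_le_inv_mul_norm_div hc (hq ξ) (hden z₀ (Metric.mem_ball_self hε) ξ))
  refine (hasDerivAt_integral_of_dominated_loc_of_deriv_le (Metric.ball_mem_nhds z₀ hε)
    (F' := fun z ξ => -w ξ / (z + (ξ : ℂ) ^ 2) ^ 2) (Eventually.of_forall hmeas) hint hmeas'
    (ae_of_all _ fun ξ z hz => ?_)
    (hw.norm.const_mul (c ^ 2)⁻¹) (ae_of_all _ fun ξ z hz => ?_)).2
    |>.differentiableAt.differentiableWithinAt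
  · rw [neg_div, norm_neg]
    exact norm_div_sq_le_inv_sq_mul_norm_div hc (hq_one ξ) (hden z hz ξ)
  · exact ((hasDerivAt_const z (w ξ)).div ((hasDerivAt_id z).add_const _)
      (hne z hz ξ)).congr_deriv (by simp only [id]; ring)

theorem eqOn_slitPlane_of_forall_pos_eq {f g : ℂ → ℂ} (hf : DifferentiableOn ℂ f slitPlane)
    (hg : DifferentiableOn ℂ g slitPlane) (hfg : ∀ t : ℝ, 0 < t → f t = g t) :
    EqOn f g slitPlane := by
  have hofReal : Tendsto ((↑) : ℝ → ℂ) (𝓝[≠] 1) (𝓝[≠] 1) :=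
    continuous_ofReal.continuousWithinAt.tendsto_nhdsWithin fun t ht => by
      simpa using ht
  have hpos : ∃ᶠ t : ℝ in 𝓝[≠] 1, 0 < t :=
    (eventually_nhdsWithin_of_eventually_nhds (lt_mem_nhds one_pos)).frequently
  exact (hf.analyticOnNhd isOpen_slitPlane).eqOn_of_preconnected_of_frequently_eq
    (hg.analyticOnNhd isOpen_slitPlane)
    (starConvex_one_slitPlane.isPathConnected one_mem_slitPlane).isConnected.isPreconnected
    one_mem_slitPlane (hofReal.frequently (hpos.mono hfg))

end Complex

theorem stmt2_general (αt η : ℝ) (hαt0 : 0 < αt) (hαt1 : αt < 1)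
    (lam : ℂ) (hlam : ¬ (lam.im = 0 ∧ lam.re ≤ -η)) :
    ∫ ξ : ℝ, ((|ξ| ^ (2 * αt - 1) : ℝ) : ℂ) / (lam + (η : ℂ) + (ξ : ℂ) ^ 2)
      = ((Real.pi : ℂ) / (Real.sin (αt * Real.pi) : ℂ)) *
          (lam + (η : ℂ)) ^ ((αt : ℂ) - 1) := by
  have hz : lam + η ∈ slitPlane := by
    rw [mem_slitPlane_iff, add_re, add_im, ofReal_re, ofReal_im, add_zero]
    by_contra! h
    exact hlam ⟨h.2, by linarith [h.1]⟩
  have hreal := fun t (ht : 0 < t) => integral_ofReal_abs_rpow_div_add_sq hαt0 hαt1 ht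
  have hsin : Real.sin (αt * π) ≠ 0 :=
    (Real.sin_pos_of_pos_of_lt_pi (by positivity) (by nlinarith [Real.pi_pos])).ne'
  -- The integral at `t = 1` is nonzero, and the integral of a non-integrable function is `0`.
  have hw : Integrable fun ξ : ℝ => ((|ξ| ^ (2 * αt - 1) : ℝ) : ℂ) / (1 + (ξ : ℂ) ^ 2) := by
    refine .of_integral_ne_zero ?_
    have h1 := hreal 1 one_pos
    push_cast at h1
    rw [h1, one_cpow, mul_one]
    exact div_ne_zero (ofReal_ne_zero.mpr Real.pi_ne_zero) (by exact_mod_cast hsin)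
  have hG : DifferentiableOn ℂ (fun z : ℂ => ((π : ℂ) / (Real.sin (αt * π) : ℂ)) *
      z ^ ((αt : ℂ) - 1)) slitPlane :=
    (differentiableOn_id.cpow_const fun z hz => hz).const_mul _
  simpa only [add_assoc] using eqOn_slitPlane_of_forall_pos_eq
    (differentiableOn_integral_div_add_sq hw) hG hreal hz

/-- For `0 < α̃ < 1`, `η ≥ 0` and `λ ∈ ℂ \ (-∞, -η]`,
`∫_ℝ |ξ|^{2α̃-1} / (λ + η + ξ²) dξ = (π / sin(α̃π)) (λ+η)^{α̃-1}`
(principal branch of the complex power). -/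
theorem stmt2 (αt η : ℝ) (hαt0 : 0 < αt) (hαt1 : αt < 1) (hη : 0 ≤ η)
    (lam : ℂ) (hlam : ¬ (lam.im = 0 ∧ lam.re ≤ -η)) :
    ∫ ξ : ℝ, ((|ξ| ^ (2 * αt - 1) : ℝ) : ℂ) / (lam + (η : ℂ) + (ξ : ℂ) ^ 2)
      = ((Real.pi : ℂ) / (Real.sin (αt * Real.pi) : ℂ)) *
          (lam + (η : ℂ)) ^ ((αt : ℂ) - 1) :=
  stmt2_general αt η hαt0 hαt1 lam hlam
end

section
/- Let 0 < α̃ < 1, η ≥ 0, μ(ξ) = |ξ|^{(2α̃−1)/2}, and let U : [0,∞) → ℝ be continuous. For t ≥ 0 and ξ ∈ ℝ define φ(ξ,t) = μ(ξ) ∫₀ᵗ e^{−(ξ²+η)(t−s)} U(s) ds, which is the solution of ∂ₜφ(ξ,t) + (ξ²+η) φ(ξ,t) − U(t) μ(ξ) = 0 with φ(ξ,0) = 0. Then for every t > 0, π^{−1} sin(α̃π) ∫_{−∞}^{+∞} μ(ξ) φ(ξ,t) dξ = (1/Γ(1−α̃)) ∫₀ᵗ (t−τ)^{−α̃} e^{−η(t−τ)}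 U(τ) dτ, i.e. the output of the diffusive realization equals the generalized fractional integral I^{1−α̃,η}U evaluated at t. -/
/-!
For `s < t` the Gaussian moment `∫_ℝ |ξ|^{2α-1} e^{-(t-s)ξ²} dξ` equals `Γ(α) (t-s)^{-α}`, so
Fubini turns the diffusive output into `Γ(α) ∫₀ᵗ (t-s)^{-α} e^{-η(t-s)} U(s) ds`; Fubini applies
because `(t-s)^{-α}` is integrable near `s = t` when `α < 1`. Euler's reflection formula
`Γ(α) Γ(1-α) = π / sin(πα)` then turns `π⁻¹ sin(απ) Γ(α)` into `1 / Γ(1-α)`.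
-/

open MeasureTheory Set Real

lemma integrable_comp_abs_of_integrableOn_Ioi {f : ℝ → ℝ} (hf : IntegrableOn f (Ioi 0)) :
    Integrable fun x => f |x| := by
  have hIoi : IntegrableOn (fun x => f |x|) (Ioi 0) :=
    hf.congr_fun (fun x hx => by rw [abs_of_pos (mem_Ioi.mp hx)]) measurableSet_Ioi
  have hIic : IntegrableOn (fun x => f |x|) (Iic 0) := by
    have hneg : MeasurableEmbedding fun x : ℝ => -x := (Homeomorph.neg ℝ).measurableEmbedding
    rw [← Measure.map_neg_eq_self (volume : Measure ℝ), hneg.integrableOn_map_iff]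
    simp_rw [Function.comp_def, abs_neg, neg_preimage, neg_Iic, neg_zero]
    exact (integrableOn_Ici_iff_integrableOn_Ioi).mpr hIoi
  rw [← integrableOn_univ, ← Iic_union_Ioi (a := (0 : ℝ))]
  exact hIic.union hIoi

lemma integrable_abs_rpow_mul_exp_neg_mul_sq {α b : ℝ} (hα : 0 < α) (hb : 0 < b) :
    Integrable fun x : ℝ => |x| ^ (2 * α - 1) * exp (-b * x ^ 2) := by
  simpa only [sq_abs] using integrable_comp_abs_of_integrableOn_Ioi
    (integrableOn_rpow_mul_exp_neg_mul_sq hb (s := 2 * α - 1) (by linarith))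

lemma integral_abs_rpow_mul_exp_neg_mul_sq {α b : ℝ} (hα : 0 < α) (hb : 0 < b) :
    ∫ x : ℝ, |x| ^ (2 * α - 1) * exp (-b * x ^ 2) = Gamma α * b ^ (-α) := by
  have h := integral_rpow_mul_exp_neg_mul_rpow two_pos (q := 2 * α - 1) (by linarith) hb
  simp_rw [rpow_two] at h
  conv_lhs => enter [2, x]; rw [← sq_abs x]
  rw [integral_comp_abs (f := fun x => x ^ (2 * α - 1) * exp (-b * x ^ 2)), h,
    show (2 * α - 1 + 1) / 2 = α by ring, show -(2 * α - 1 + 1) / 2 = -α by ring]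
  ring

lemma inv_pi_mul_sin_mul_Gamma {α : ℝ} (hα : sin (α * π) ≠ 0) :
    π⁻¹ * sin (α * π) * Gamma α = (Gamma (1 - α))⁻¹ := by
  rw [mul_comm α π] at hα ⊢
  have hrefl := Gamma_mul_Gamma_one_sub α
  have hΓ : Gamma (1 - α) ≠ 0 := by
    intro h
    rw [h, mul_zero, eq_comm, div_eq_zero_iff] at hrefl
    exact hrefl.elim pi_ne_zero hα
  field_simp
  rw [mul_assoc, hrefl]
  field_simp

theorem integral_abs_rpow_mul_integral_exp_neg_mul_sq {α t : ℝ} (hα0 : 0 < α) (hα1 : α < 1)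
    (ht : 0 < t) {g : ℝ → ℝ} (hg : ContinuousOn g (Icc 0 t)) :
    ∫ ξ : ℝ, |ξ| ^ (2 * α - 1) * ∫ s in (0)..t, exp (-(t - s) * ξ ^ 2) * g s
      = Gamma α * ∫ s in (0)..t, (t - s) ^ (-α) * g s := by
  set F : ℝ × ℝ → ℝ := fun p => |p.1| ^ (2 * α - 1) * exp (-(t - p.2) * p.1 ^ 2) * g p.2
  have hslice : ∀ s ∈ Ioo 0 t, ∀ a : ℝ,
      ∫ ξ : ℝ, |ξ| ^ (2 * α - 1) * exp (-(t - s) * ξ ^ 2) * a = Gamma α * (t - s) ^ (-α) * a :=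
    fun s hs a => by
      rw [integral_mul_const, integral_abs_rpow_mul_exp_neg_mul_sq hα0 (sub_pos.2 hs.2)]
  have hF_meas : AEStronglyMeasurable F (volume.prod (volume.restrict (Ioo 0 t))) := by
    refine AEStronglyMeasurable.mul ?_ ?_
    · exact Measurable.aestronglyMeasurable (by fun_prop)
    · exact ((hg.mono Ioo_subset_Icc_self).aestronglyMeasurable measurableSet_Ioo).comp_snd
  have hkernel : IntegrableOn (fun s => (t - s) ^ (-α)) (Icc 0 t) := by
    rw [integrableOn_Icc_iff_integrableOn_Ioc,
      ← intervalIntegrable_iff_integrableOn_Ioc_of_le ht.le]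
    simpa using ((intervalIntegral.intervalIntegrable_rpow' (a := 0) (b := t)
      (r := -α) (by linarith)).comp_sub_left t).symm
  have hF_int : Integrable F (volume.prod (volume.restrict (Ioo 0 t))) := by
    rw [integrable_prod_iff' hF_meas]
    refine ⟨ae_restrict_of_forall_mem measurableSet_Ioo fun s hs => by
      dsimp only [F]
      exact (integrable_abs_rpow_mul_exp_neg_mul_sq hα0 (sub_pos.2 hs.2)).mul_const _, ?_⟩
    refine ((hkernel.mul_continuousOn (hg.norm.const_smul (Gamma α)) isCompact_Icc).mono_set
      Ioo_subset_Icc_self).congr ?_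
    filter_upwards [ae_restrict_mem measurableSet_Ioo] with s hs
    have hnorm : ∀ ξ, ‖F (ξ, s)‖ = |ξ| ^ (2 * α - 1) * exp (-(t - s) * ξ ^ 2) * |g s| :=
      fun ξ => by
        simp only [F, norm_mul, norm_eq_abs, abs_of_nonneg (rpow_nonneg (abs_nonneg ξ) _),
          abs_of_pos (exp_pos _)]
    simp only [hnorm, hslice s hs, Pi.smul_apply, smul_eq_mul, norm_eq_abs]
    ring
  calc ∫ ξ : ℝ, |ξ| ^ (2 * α - 1) * ∫ s in (0)..t, exp (-(t - s) * ξ ^ 2) * g s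
      = ∫ ξ : ℝ, ∫ s in Ioo 0 t, F (ξ, s) := by
        simp only [intervalIntegral.integral_of_le ht.le, integral_Ioc_eq_integral_Ioo,
          ← integral_const_mul, F, mul_assoc]
    _ = ∫ s in Ioo 0 t, ∫ ξ : ℝ, F (ξ, s) := integral_integral_swap hF_int
    _ = ∫ s in Ioo 0 t, Gamma α * ((t - s) ^ (-α) * g s) :=
        setIntegral_congr_fun measurableSet_Ioo fun s hs => by
          dsimp only [F]
          rw [hslice s hs, mul_assoc]
    _ = Gamma α * ∫ s in (0)..t, (t - s) ^ (-α) * g s := by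
        rw [integral_const_mul, intervalIntegral.integral_of_le ht.le,
          integral_Ioc_eq_integral_Ioo]

theorem stmt3_general (αt η : ℝ) (hαt0 : 0 < αt) (hαt1 : αt < 1)
    (U : ℝ → ℝ) (hU : ContinuousOn U (Ici (0:ℝ)))
    (φ : ℝ → ℝ → ℝ)
    (hφ : ∀ ξ : ℝ, ∀ t : ℝ, 0 ≤ t →
      φ ξ t = |ξ| ^ ((2 * αt - 1) / 2) *
        ∫ s in (0:ℝ)..t, Real.exp (-(ξ ^ 2 + η) * (t - s)) * U s)
    (t : ℝ) (ht : 0 < t) :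
    Real.pi⁻¹ * Real.sin (αt * Real.pi) *
        ∫ ξ : ℝ, |ξ| ^ ((2 * αt - 1) / 2) * φ ξ t
      = (1 / Real.Gamma (1 - αt)) *
        ∫ τ in (0:ℝ)..t, (t - τ) ^ (-αt) * Real.exp (-η * (t - τ)) * U τ := by
  have hg : ContinuousOn (fun s => exp (-η * (t - s)) * U s) (Icc 0 t) :=
    (by fun_prop : Continuous fun s => exp (-η * (t - s))).continuousOn.mul
      (hU.mono Icc_subset_Ici_self)
  have hφ_ae : (fun ξ => |ξ| ^ ((2 * αt - 1) / 2) * φ ξ t) =ᵐ[volume]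
      fun ξ => |ξ| ^ (2 * αt - 1) *
        ∫ s in (0)..t, exp (-(t - s) * ξ ^ 2) * (exp (-η * (t - s)) * U s) := by
    filter_upwards [compl_mem_ae_iff.mpr (measure_singleton (0 : ℝ))] with ξ hξ
    have hsplit : ∀ s, exp (-(ξ ^ 2 + η) * (t - s)) * U s
        = exp (-(t - s) * ξ ^ 2) * (exp (-η * (t - s)) * U s) := fun s => by
      rw [← mul_assoc, ← exp_add]; ring_nf
    rw [hφ ξ t ht.le, ← mul_assoc, ← rpow_add (abs_pos.mpr hξ)]
    simp only [hsplit, add_halves]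
  have hsin : sin (αt * π) ≠ 0 :=
    (sin_pos_of_pos_of_lt_pi (by positivity) (by nlinarith [pi_pos])).ne'
  rw [integral_congr_ae hφ_ae, integral_abs_rpow_mul_integral_exp_neg_mul_sq hαt0 hαt1 ht hg,
    ← mul_assoc, inv_pi_mul_sin_mul_Gamma hsin, one_div]
  simp only [mul_assoc]

/-- For `0 < α̃ < 1`, `η ≥ 0`, `μ(ξ) = |ξ|^{(2α̃-1)/2}` and continuous
input `U`, the solution `φ(ξ,t) = μ(ξ) ∫₀ᵗ e^{-(ξ²+η)(t-s)} U(s) ds` of the diffusive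
realization satisfies, for every `t > 0`,
`π⁻¹ sin(α̃π) ∫_ℝ μ(ξ) φ(ξ,t) dξ = (1/Γ(1-α̃)) ∫₀ᵗ (t-τ)^{-α̃} e^{-η(t-τ)} U(τ) dτ`,
i.e. the output equals the generalized fractional integral `I^{1-α̃,η} U` at `t`. -/
theorem stmt3 (αt η : ℝ) (hαt0 : 0 < αt) (hαt1 : αt < 1) (hη : 0 ≤ η)
    (U : ℝ → ℝ) (hU : ContinuousOn U (Ici (0:ℝ)))
    (φ : ℝ → ℝ → ℝ)
    (hφ : ∀ ξ : ℝ, ∀ t : ℝ, 0 ≤ t →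
      φ ξ t = |ξ| ^ ((2 * αt - 1) / 2) *
        ∫ s in (0:ℝ)..t, Real.exp (-(ξ ^ 2 + η) * (t - s)) * U s)
    (t : ℝ) (ht : 0 < t) :
    Real.pi⁻¹ * Real.sin (αt * Real.pi) *
        ∫ ξ : ℝ, |ξ| ^ ((2 * αt - 1) / 2) * φ ξ t
      = (1 / Real.Gamma (1 - αt)) *
        ∫ τ in (0:ℝ)..t, (t - τ) ^ (-αt) * Real.exp (-η * (t - τ)) * U τ :=
  stmt3_general αt η hαt0 hαt1 U hU φ hφ t ht
end

section
/- Let 0 < α < 1, 0 < α̃ < 1, η ≥ 0, ζ > 0 and μ(ξ) = |ξ|^{(2α̃−1)/2}. Suppose v : [0,1] → ℂ is continuous, continuously differentiable on (0,1], the map x ↦ x^α v'(x) extends to a continuously differentiable function on [0,1], and define v_t := −i (x^α v')'. Assume the boundary conditions v'(1) = 0 and (x^α v')(0) = i ζ ∫_ℝ μ(ξ) φ(ξ) dξ, where φ : ℝ → ℂ is measurable with φ, ξφ ∈ L²(ℝ) and μφ ∈ L¹(ℝ), and let φ_t(ξ) := v(0) μ(ξ) − (ξ²+η) φ(ξ)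 (assumed to satisfy φ_t ∈ L²(ℝ)). Then Re ∫₀¹ v_t(x) \overline{v(x)} dx + ζ Re ∫_ℝ φ_t(ξ) \overline{φ(ξ)} dξ = −ζ ∫_ℝ (ξ²+η) |φ(ξ)|² dξ. -/
/-!
On `(0,1)` the product `g · conj v' = xᵅ |v'|²` is real, so `Im (g · conj v)` has derivative
`Im (g' · conj v)`, and the fundamental theorem of calculus gives
`Re ∫₀¹ -i g' v̄ = Im ∫₀¹ g' v̄ = Im (g v̄)|₀¹ = -ζ Re (M v̄(0))` with `M = ∫ μ φ`, by the two
boundary conditions. On `ℝ`, `∫ φ_t φ̄ = v(0) M̄ - ∫ (ξ² + η) |φ|²`, whose real part cancels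
that boundary term.
-/

open MeasureTheory Set Complex
open scoped ComplexConjugate

/-- No integrability of `g · conj v'` is required: near a degenerate endpoint it may fail. -/
theorem im_setIntegral_deriv_mul_conj {a b : ℝ} (hab : a ≤ b) {g g' v v' : ℝ → ℂ}
    (hgc : ContinuousOn g (Icc a b)) (hvc : ContinuousOn v (Icc a b))
    (hg : ∀ x ∈ Ioo a b, HasDerivAt g (g' x) x) (hv : ∀ x ∈ Ioo a b, HasDerivAt v (v' x) x)
    (hint : IntegrableOn (fun x => g' x * conj (v x)) (Ioc a b))
    (hreal : ∀ x ∈ Ioo a b, (g x * conj (v' x)).im = 0) :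
    (∫ x in Ioc a b, g' x * conj (v x)).im = (g b * conj (v b)).im - (g a * conj (v a)).im := by
  have hder : ∀ x ∈ Ioo a b,
      HasDerivAt (fun y => (g y * conj (v y)).im) (g' x * conj (v x)).im x := fun x hx =>
    (imCLM.hasFDerivAt.comp_hasDerivAt x ((hg x hx).mul (hv x hx).star)).congr_deriv
      (by simp [← hreal x hx])
  have hcont : ContinuousOn (fun y => (g y * conj (v y)).im) (Icc a b) :=
    continuous_im.comp_continuousOn (hgc.mul (continuous_conj.comp_continuousOn hvc))
  rw [← imCLM_apply, ← imCLM.integral_comp_comm hint, ← intervalIntegral.integral_of_le hab]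
  exact intervalIntegral.integral_eq_sub_of_hasDerivAt_of_le hab hcont hder
    ((intervalIntegrable_iff_integrableOn_Ioc_of_le hab).2 hint.im)

theorem integral_sub_mul_conj {X : Type*} [MeasurableSpace X] {μ : Measure X}
    (c : ℂ) {m w : X → ℝ} {φ : X → ℂ}
    (hm : Integrable (fun x => (m x : ℂ) * φ x) μ)
    (hw : Integrable (fun x => w x * ‖φ x‖ ^ 2) μ) :
    ∫ x, (c * m x - w x * φ x) * conj (φ x) ∂μ
      = c * conj (∫ x, m x * φ x ∂μ) - ((∫ x, w x * ‖φ x‖ ^ 2 ∂μ : ℝ) : ℂ) := by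
  have hpt : ∀ x, (c * m x - w x * φ x) * conj (φ x)
      = c * conj (m x * φ x) - ((w x * ‖φ x‖ ^ 2 : ℝ) : ℂ) := fun x => by
    rw [map_mul, conj_ofReal, ofReal_mul, ofReal_pow, ← mul_conj']
    ring
  have hm' : Integrable (fun x => conj ((m x : ℂ) * φ x)) μ :=
    (conjCLE : ℂ →L[ℝ] ℂ).integrable_comp hm
  have hw' : Integrable (fun x => ((w x * ‖φ x‖ ^ 2 : ℝ) : ℂ)) μ := hw.ofReal
  simp_rw [hpt]
  rw [integral_sub (hm'.const_mul c) hw', integral_const_mul, integral_conj,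
    integral_complex_ofReal]

theorem integrable_sq_add_const_mul_norm_sq {φ : ℝ → ℂ} (η : ℝ) (hφ : MemLp φ 2)
    (hξφ : MemLp (fun ξ : ℝ => (ξ : ℂ) * φ ξ) 2) :
    Integrable (fun ξ : ℝ => (ξ ^ 2 + η) * ‖φ ξ‖ ^ 2) := by
  refine (hξφ.norm.integrable_sq.add (hφ.norm.integrable_sq.const_mul η)).congr
    (.of_forall fun ξ => ?_)
  simp only [Pi.add_apply, norm_mul, norm_real, Real.norm_eq_abs, mul_pow, sq_abs]
  ring

theorem stmt4_general (α αt η ζ : ℝ)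
    (v v' g g' : ℝ → ℂ) (φ : ℝ → ℂ)
    (hv : ContinuousOn v (Icc (0:ℝ) 1))
    (hv' : ∀ x ∈ Ioc (0:ℝ) 1, HasDerivWithinAt v (v' x) (Ioc (0:ℝ) 1) x)
    (hg : ∀ x ∈ Ioc (0:ℝ) 1, g x = ((x ^ α : ℝ) : ℂ) * v' x)
    (hg' : ∀ x ∈ Icc (0:ℝ) 1, HasDerivWithinAt g (g' x) (Icc (0:ℝ) 1) x)
    (hg'c : ContinuousOn g' (Icc (0:ℝ) 1))
    (hbc1 : v' 1 = 0)
    (hφ2 : MemLp φ 2 volume)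
    (hξφ2 : MemLp (fun ξ : ℝ => (ξ : ℂ) * φ ξ) 2 volume)
    (hμφ1 : Integrable (fun ξ : ℝ => ((|ξ| ^ ((2 * αt - 1) / 2) : ℝ) : ℂ) * φ ξ))
    (hbc0 : g 0 = Complex.I * (ζ : ℂ) *
      ∫ ξ : ℝ, ((|ξ| ^ ((2 * αt - 1) / 2) : ℝ) : ℂ) * φ ξ) :
    (∫ x in Ioc (0:ℝ) 1, (-Complex.I * g' x) * (starRingEnd ℂ) (v x)).re
      + ζ * (∫ ξ : ℝ, (v 0 * ((|ξ| ^ ((2 * αt - 1) / 2) : ℝ) : ℂ)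
          - ((ξ ^ 2 + η : ℝ) : ℂ) * φ ξ) * (starRingEnd ℂ) (φ ξ)).re
      = -ζ * ∫ ξ : ℝ, (ξ ^ 2 + η) * ‖φ ξ‖ ^ 2 := by
  have hg1 : g 1 = 0 := by rw [hg 1 (right_mem_Ioc.2 one_pos), hbc1, mul_zero]
  have hIm := im_setIntegral_deriv_mul_conj zero_le_one
    (fun x hx => (hg' x hx).continuousWithinAt) hv
    (fun x hx => (hg' x (Ioo_subset_Icc_self hx)).hasDerivAt (Icc_mem_nhds hx.1 hx.2))
    (fun x hx => (hv' x (Ioo_subset_Ioc_self hx)).hasDerivAt (Ioc_mem_nhds hx.1 hx.2))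
    ((hg'c.mul (continuous_conj.comp_continuousOn hv)).integrableOn_Icc.mono_set
      Ioc_subset_Icc_self)
    (fun x hx => by
      rw [hg x (Ioo_subset_Ioc_self hx), mul_assoc, mul_conj', ← ofReal_pow, ← ofReal_mul,
        ofReal_im])
  rw [hg1, hbc0] at hIm
  simp_rw [mul_assoc (-I)]
  rw [integral_const_mul, integral_sub_mul_conj (v 0) hμφ1
    (integrable_sq_add_const_mul_norm_sq η hφ2 hξφ2)]
  simp only [zero_mul, zero_im, mul_im, mul_re, I_re, ofReal_re, I_im, ofReal_im, mul_zero,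
    sub_self, one_mul, zero_add, zero_sub, conj_im, mul_neg, neg_mul, neg_neg, conj_re,
    neg_add_rev, neg_re, sub_re, sub_neg_eq_add] at hIm ⊢
  linear_combination hIm

/-- Energy dissipation identity for the augmented system of the degenerate
Schrödinger equation with fractional boundary damping at the degenerate point `x = 0`:
with `v_t := -i (xᵅ v')'` (where `g` is the extension of `x ↦ xᵅ v'(x)` to `[0,1]` with
derivative `g'`), `μ(ξ) = |ξ|^{(2α̃-1)/2}` and `φ_t(ξ) := v(0) μ(ξ) - (ξ²+η) φ(ξ)`,
`Re ∫₀¹ v_t v̄ dx + ζ Re ∫_ℝ φ_t φ̄ dξ = -ζ ∫_ℝ (ξ²+η) |φ(ξ)|² dξ`. -/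
theorem stmt4 (α αt η ζ : ℝ) (hα0 : 0 < α) (hα1 : α < 1)
    (hαt0 : 0 < αt) (hαt1 : αt < 1) (hη : 0 ≤ η) (hζ : 0 < ζ)
    (v v' g g' : ℝ → ℂ) (φ : ℝ → ℂ)
    (hv : ContinuousOn v (Icc (0:ℝ) 1))
    (hv' : ∀ x ∈ Ioc (0:ℝ) 1, HasDerivWithinAt v (v' x) (Ioc (0:ℝ) 1) x)
    (hv'c : ContinuousOn v' (Ioc (0:ℝ) 1))
    (hg : ∀ x ∈ Ioc (0:ℝ) 1, g x = ((x ^ α : ℝ) : ℂ) * v' x)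
    (hg' : ∀ x ∈ Icc (0:ℝ) 1, HasDerivWithinAt g (g' x) (Icc (0:ℝ) 1) x)
    (hg'c : ContinuousOn g' (Icc (0:ℝ) 1))
    (hbc1 : v' 1 = 0)
    (hφmeas : Measurable φ)
    (hφ2 : MemLp φ 2 volume)
    (hξφ2 : MemLp (fun ξ : ℝ => (ξ : ℂ) * φ ξ) 2 volume)
    (hμφ1 : Integrable (fun ξ : ℝ => ((|ξ| ^ ((2 * αt - 1) / 2) : ℝ) : ℂ) * φ ξ))
    (hbc0 : g 0 = Complex.I * (ζ : ℂ) *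
      ∫ ξ : ℝ, ((|ξ| ^ ((2 * αt - 1) / 2) : ℝ) : ℂ) * φ ξ)
    (hφt2 : MemLp
      (fun ξ : ℝ => v 0 * ((|ξ| ^ ((2 * αt - 1) / 2) : ℝ) : ℂ)
        - ((ξ ^ 2 + η : ℝ) : ℂ) * φ ξ) 2 volume) :
    (∫ x in Ioc (0:ℝ) 1, (-Complex.I * g' x) * (starRingEnd ℂ) (v x)).re
      + ζ * (∫ ξ : ℝ, (v 0 * ((|ξ| ^ ((2 * αt - 1) / 2) : ℝ) : ℂ)
          - ((ξ ^ 2 + η : ℝ) : ℂ) * φ ξ) * (starRingEnd ℂ) (φ ξ)).re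
      = -ζ * ∫ ξ : ℝ, (ξ ^ 2 + η) * ‖φ ξ‖ ^ 2 :=
  stmt4_general α αt η ζ v v' g g' φ hv hv' hg hg' hg'c hbc1 hφ2 hξφ2 hμφ1 hbc0
end

section
/- Let 0 < α < 1 and λ ∈ ℝ. Suppose v : (0,1] → ℂ is twice continuously differentiable on (0,1], satisfies ∫₀¹ |v(x)|² dx < ∞ and ∫₀¹ x^α |v'(x)|² dx < ∞, solves (x^α v'(x))' = −λ v(x) for all x ∈ (0,1), and satisfies the boundary conditions lim_{x→0⁺} v(x) = 0, lim_{x→0⁺} x^α v'(x) = 0, and v'(1) = 0. Then v is identically zero on (0,1]. -/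
/-!
With `w = xᵅ v'` the equation is the first-order system `w' = -λ v`, `v' = x⁻ᵅ w`, and both
`v` and `w` vanish at `0⁺`. If `‖v‖ ≤ c xⁿ` on `(0,1)`, integrating from `0` twice gives
`‖w‖ ≤ |λ| c xⁿ⁺¹/(n+1)` and then `‖v‖ ≤ |λ| c xⁿ⁺²⁻ᵅ/((n+1)(n+2-α)) ≤ |λ| c xⁿ⁺¹/(n+1)`,
since `α ≤ 1`. Starting from a bound `M` for `v`, induction gives `‖v‖ ≤ M |λ|ⁿ/n!` for all `n`.
-/

open MeasureTheory Set Complex Filter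

open scoped Topology

theorem norm_le_rpow_of_norm_deriv_le_rpow {E : Type*} [NormedAddCommGroup E] [NormedSpace ℝ E]
    {f f' : ℝ → E} {b C k : ℝ} (hk : -1 < k)
    (hf : ∀ t ∈ Ioo 0 b, HasDerivAt f (f' t) t)
    (hf' : ∀ t ∈ Ioo 0 b, ‖f' t‖ ≤ C * t ^ k)
    (hf0 : Tendsto f (𝓝[>] 0) (𝓝 0)) :
    ∀ x ∈ Ioo 0 b, ‖f x‖ ≤ C / (k + 1) * x ^ (k + 1) := by
  intro x hx
  have hk1 : 0 < k + 1 := by linarith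
  have hC : 0 ≤ C :=
    nonneg_of_mul_nonneg_left ((norm_nonneg _).trans (hf' x hx)) (Real.rpow_pos_of_pos hx.1 k)
  have hfence : ∀ ε ∈ Ioo 0 x, ‖f x‖ ≤ ‖f ε‖ + C / (k + 1) * x ^ (k + 1) := by
    intro ε hε
    have hsub : Icc ε x ⊆ Ioo 0 b := Icc_subset_Ioo hε.1 hx.2
    have hB : ∀ t ∈ Icc ε x, HasDerivAt (fun t => ‖f ε‖ + C / (k + 1) * t ^ (k + 1))
        (C * t ^ k) t := by
      intro t ht
      refine (((Real.hasDerivAt_rpow_const (p := k + 1)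
        (Or.inl (hε.1.trans_le ht.1).ne')).const_mul (C / (k + 1))).const_add ‖f ε‖).congr_deriv ?_
      rw [add_sub_cancel_right]
      field_simp [hk1.ne']
    refine image_norm_le_of_norm_deriv_right_le_deriv_boundary' (f' := f')
      (fun t ht => (hf t (hsub ht)).continuousAt.continuousWithinAt)
      (fun t ht => (hf t (hsub (Ico_subset_Icc_self ht))).hasDerivWithinAt) ?_
      (fun t ht => (hB t ht).continuousAt.continuousWithinAt)
      (fun t ht => (hB t (Ico_subset_Icc_self ht)).hasDerivWithinAt)
      (fun t ht => hf' t (hsub (Ico_subset_Icc_self ht))) (right_mem_Icc.2 hε.2.le)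
    have := Real.rpow_nonneg hε.1.le (k + 1)
    simp only [le_add_iff_nonneg_right]
    positivity
  have hlim := hf0.norm.add_const (C / (k + 1) * x ^ (k + 1))
  rw [norm_zero, zero_add] at hlim
  exact ge_of_tendsto hlim (eventually_of_mem (Ioo_mem_nhdsGT hx.1) hfence)

theorem exists_norm_le_of_continuousOn_Ioo {E : Type*} [NormedAddCommGroup E]
    {f : ℝ → E} {a b : ℝ} {la lb : E} (hf : ContinuousOn f (Ioo a b))
    (ha : Tendsto f (𝓝[>] a) (𝓝 la)) (hb : Tendsto f (𝓝[<] b) (𝓝 lb)) :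
    ∃ M, ∀ t ∈ Ioo a b, ‖f t‖ ≤ M := by
  obtain ⟨M, hM⟩ := isCompact_Icc.exists_bound_of_continuousOn
    (continuousOn_Icc_extendFrom_Ioo hf ha hb)
  exact ⟨M, fun t ht => extendFrom_extends hf t ht ▸ hM t (Ioo_subset_Icc_self ht)⟩

theorem norm_le_pow_succ_of_norm_le_pow {α lam : ℝ} {v v' : ℝ → ℂ} (hα : α ≤ 1)
    (hv : ∀ t ∈ Ioo (0:ℝ) 1, HasDerivAt v (v' t) t)
    (hode : ∀ x ∈ Ioo (0:ℝ) 1,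
      HasDerivAt (fun y : ℝ => ((y ^ α : ℝ) : ℂ) * v' y) (-(lam : ℂ) * v x) x)
    (hv0 : Tendsto v (𝓝[>] 0) (𝓝 0))
    (hxv0 : Tendsto (fun x : ℝ => ((x ^ α : ℝ) : ℂ) * v' x) (𝓝[>] 0) (𝓝 0))
    {c : ℝ} {n : ℕ} (hvn : ∀ t ∈ Ioo (0:ℝ) 1, ‖v t‖ ≤ c * t ^ n) :
    ∀ t ∈ Ioo (0:ℝ) 1, ‖v t‖ ≤ |lam| * c / (n + 1) * t ^ (n + 1) := by
  have hflux : ∀ t ∈ Ioo (0:ℝ) 1,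
      ‖((t ^ α : ℝ) : ℂ) * v' t‖ ≤ |lam| * c / (n + 1) * t ^ ((n : ℝ) + 1) := by
    refine norm_le_rpow_of_norm_deriv_le_rpow (by linarith [n.cast_nonneg (α := ℝ)]) hode
      (fun t ht => ?_) hxv0
    rw [norm_mul, norm_neg, Complex.norm_real, Real.norm_eq_abs, mul_assoc, Real.rpow_natCast]
    exact mul_le_mul_of_nonneg_left (hvn t ht) (abs_nonneg lam)
  have hv' : ∀ t ∈ Ioo (0:ℝ) 1,
      ‖v' t‖ ≤ |lam| * c / (n + 1) * t ^ ((n : ℝ) + 1 - α) := by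
    intro t ht
    have htα : 0 < t ^ α := Real.rpow_pos_of_pos ht.1 α
    have h := hflux t ht
    rw [norm_mul, Complex.norm_real, Real.norm_of_nonneg htα.le] at h
    rw [Real.rpow_sub ht.1, ← mul_div_assoc, le_div_iff₀ htα]
    linarith
  intro t ht
  have hc : 0 ≤ |lam| * c / (n + 1) := by
    have := nonneg_of_mul_nonneg_left ((norm_nonneg _).trans (hvn t ht)) (pow_pos ht.1 n)
    positivity
  calc ‖v t‖ ≤ |lam| * c / (n + 1) / ((n : ℝ) + 1 - α + 1) * t ^ ((n : ℝ) + 1 - α + 1) :=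
        norm_le_rpow_of_norm_deriv_le_rpow (by linarith) hv hv' hv0 t ht
    _ ≤ |lam| * c / (n + 1) * t ^ ((n : ℝ) + 1) :=
        mul_le_mul (div_le_self hc (by linarith))
          (Real.rpow_le_rpow_of_exponent_ge ht.1 ht.2.le (by linarith))
          (Real.rpow_nonneg ht.1.le _) hc
    _ = |lam| * c / (n + 1) * t ^ (n + 1) := by norm_cast

open Nat in
theorem eq_zero_on_Ioo_of_degenerate_ode {α lam M : ℝ} {v v' : ℝ → ℂ} (hα : α ≤ 1)
    (hv : ∀ t ∈ Ioo (0:ℝ) 1, HasDerivAt v (v' t) t)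
    (hode : ∀ x ∈ Ioo (0:ℝ) 1,
      HasDerivAt (fun y : ℝ => ((y ^ α : ℝ) : ℂ) * v' y) (-(lam : ℂ) * v x) x)
    (hv0 : Tendsto v (𝓝[>] 0) (𝓝 0))
    (hxv0 : Tendsto (fun x : ℝ => ((x ^ α : ℝ) : ℂ) * v' x) (𝓝[>] 0) (𝓝 0))
    (hM : ∀ t ∈ Ioo (0:ℝ) 1, ‖v t‖ ≤ M) :
    ∀ t ∈ Ioo (0:ℝ) 1, v t = 0 := by
  have hpow : ∀ n : ℕ, ∀ t ∈ Ioo (0:ℝ) 1, ‖v t‖ ≤ M * |lam| ^ n / n ! * t ^ n := by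
    intro n
    induction n with
    | zero => simpa using hM
    | succ n ih =>
      intro t ht
      calc ‖v t‖ ≤ |lam| * (M * |lam| ^ n / n !) / (n + 1) * t ^ (n + 1) :=
            norm_le_pow_succ_of_norm_le_pow hα hv hode hv0 hxv0 ih t ht
        _ = M * |lam| ^ (n + 1) / (n + 1)! * t ^ (n + 1) := by
            rw [factorial_succ]; push_cast; field_simp; ring
  intro t ht
  have hM0 : 0 ≤ M := (norm_nonneg _).trans (hM t ht)
  have hlim := (FloorSemiring.tendsto_pow_div_factorial_atTop |lam|).const_mul M
  rw [mul_zero] at hlim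
  refine norm_le_zero_iff.1 (ge_of_tendsto hlim (Eventually.of_forall fun n => ?_))
  calc ‖v t‖ ≤ M * |lam| ^ n / n ! * t ^ n := hpow n t ht
    _ ≤ M * (|lam| ^ n / n !) := by
        rw [← mul_div_assoc]
        exact mul_le_of_le_one_right (by positivity) (pow_le_one₀ ht.1.le ht.2.le)

theorem stmt7_general (α lam : ℝ) (hα1 : α < 1)
    (v v' : ℝ → ℂ)
    (hd1 : ∀ x ∈ Ioc (0:ℝ) 1, HasDerivWithinAt v (v' x) (Ioc (0:ℝ) 1) x)
    (hode : ∀ x ∈ Ioo (0:ℝ) 1,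
      HasDerivAt (fun y : ℝ => ((y ^ α : ℝ) : ℂ) * v' y) (-(lam : ℂ) * v x) x)
    (hv0 : Tendsto v (nhdsWithin 0 (Ioi (0:ℝ))) (nhds 0))
    (hxv0 : Tendsto (fun x : ℝ => ((x ^ α : ℝ) : ℂ) * v' x)
      (nhdsWithin 0 (Ioi (0:ℝ))) (nhds 0)) :
    ∀ x ∈ Ioc (0:ℝ) 1, v x = 0 := by
  have hv : ∀ t ∈ Ioo (0:ℝ) 1, HasDerivAt v (v' t) t := fun t ht =>
    (hd1 t (Ioo_subset_Ioc_self ht)).hasDerivAt (Ioc_mem_nhds ht.1 ht.2)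
  have hv1 : Tendsto v (𝓝[<] 1) (𝓝 (v 1)) := by
    rw [← nhdsWithin_Ioo_eq_nhdsLT zero_lt_one]
    exact (hd1 1 (right_mem_Ioc.2 zero_lt_one)).continuousWithinAt.mono Ioo_subset_Ioc_self
  obtain ⟨M, hM⟩ := exists_norm_le_of_continuousOn_Ioo
    (fun t ht => (hv t ht).continuousAt.continuousWithinAt) hv0 hv1
  have hzero := eq_zero_on_Ioo_of_degenerate_ode hα1.le hv hode hv0 hxv0 hM
  intro x hx
  rcases hx.2.lt_or_eq with hx1 | rfl
  · exact hzero x ⟨hx.1, hx1⟩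
  · refine tendsto_nhds_unique hv1 (tendsto_const_nhds.congr' ?_)
    filter_upwards [Ioo_mem_nhdsLT zero_lt_one] with t ht using (hzero t ht).symm

/-- No eigenvalues on the imaginary axis: if `v` is twice continuously
differentiable on `(0,1]`, lies in the weighted space (`∫₀¹|v|² < ∞`, `∫₀¹ xᵅ|v'|² < ∞`),
solves the degenerate Sturm–Liouville equation `(xᵅ v')' = -λ v` on `(0,1)` and satisfies
`v(0⁺) = 0`, `(xᵅ v')(0⁺) = 0`, `v'(1) = 0`, then `v ≡ 0` on `(0,1]`. -/
theorem stmt7 (α lam : ℝ) (hα0 : 0 < α) (hα1 : α < 1)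
    (v v' v'' : ℝ → ℂ)
    (hd1 : ∀ x ∈ Ioc (0:ℝ) 1, HasDerivWithinAt v (v' x) (Ioc (0:ℝ) 1) x)
    (hd2 : ∀ x ∈ Ioc (0:ℝ) 1, HasDerivWithinAt v' (v'' x) (Ioc (0:ℝ) 1) x)
    (hc : ContinuousOn v'' (Ioc (0:ℝ) 1))
    (hint1 : IntegrableOn (fun x => ‖v x‖ ^ 2) (Ioc (0:ℝ) 1))
    (hint2 : IntegrableOn (fun x => x ^ α * ‖v' x‖ ^ 2) (Ioc (0:ℝ) 1))
    (hode : ∀ x ∈ Ioo (0:ℝ) 1,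
      HasDerivAt (fun y : ℝ => ((y ^ α : ℝ) : ℂ) * v' y) (-(lam : ℂ) * v x) x)
    (hv0 : Tendsto v (nhdsWithin 0 (Ioi (0:ℝ))) (nhds 0))
    (hxv0 : Tendsto (fun x : ℝ => ((x ^ α : ℝ) : ℂ) * v' x)
      (nhdsWithin 0 (Ioi (0:ℝ))) (nhds 0))
    (hbc1 : v' 1 = 0) :
    ∀ x ∈ Ioc (0:ℝ) 1, v x = 0 :=
  stmt7_general α lam hα1 v v' hd1 hode hv0 hxv0
end

section
/- Let ν > −1, a > 0 and x > 0. Then 2a² ∫₀ˣ t · J_ν(at)² dt = (a²x² − ν²) · J_ν(ax)² + ( x · (d/dx)[J_ν(ax)] )², where (d/dx)[J_ν(ax)] denotes the derivative at x of the function t ↦ J_ν(at). -/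
/-!
Write `J_ν(y) = (y/2)^ν h(y²/4)` with `h(u) = ∑ c_m u^m` an everywhere convergent power series.
The recurrence `c_m = -(m+1)(m+ν+1) c_{m+1}` is the ODE `u h'' + (ν+1) h' + h = 0`, i.e. Bessel's
equation `y (y J')' = (ν² - y²) J` for `y > 0`. With it, `W(y) = (y² - ν²) J(y)² + (y J'(y))²` has
derivative `2 y J(y)²`. In terms of `h`, `W(y) = 4 ((y/2)^(ν+1))² (h² + ν h h' + u h'²)`, which is
continuous on `[0, ∞)` and vanishes at `0` because `ν + 1 > 0`; so the fundamental theorem of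
calculus gives `2 ∫₀^y t J(t)² dt = W(y)`, and the substitution `t ↦ a t` gives the identity.
-/

open MeasureTheory intervalIntegral

/-- The Bessel function of the first kind of real order `ν`,
`J_ν(y) = ∑_{m=0}^∞ ((-1)^m / (m! Γ(m+ν+1))) (y/2)^{2m+ν}` (for `y > 0`,
using real powers). -/
noncomputable def besselJ (ν y : ℝ) : ℝ :=
  ∑' m : ℕ, ((-1) ^ m / (m.factorial * Real.Gamma (m + ν + 1))) *
    (y / 2) ^ (2 * (m : ℝ) + ν)

open Filter Topology Set

def IsEntireCoeff (q : ℕ → ℝ) : Prop := ∀ u : ℝ, Summable fun m => q m * u ^ m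

def derivCoeff (q : ℕ → ℝ) (m : ℕ) : ℝ := (m + 1) * q (m + 1)

noncomputable def seriesSum (q : ℕ → ℝ) (u : ℝ) : ℝ := ∑' m, q m * u ^ m

lemma natCast_mul_pow_pred_le {y R : ℝ} (hR : 1 ≤ R) (hy : |y| ≤ R) (m : ℕ) :
    m * |y| ^ (m - 1) ≤ (2 * R) ^ m := by
  have h2 : (m : ℝ) ≤ 2 ^ m := mod_cast Nat.lt_two_pow_self.le
  have hy' : |y| ^ (m - 1) ≤ R ^ m :=
    (pow_le_pow_left₀ (abs_nonneg y) hy _).trans (pow_le_pow_right₀ hR (Nat.sub_le m 1))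
  rw [mul_pow]
  exact mul_le_mul h2 hy' (by positivity) (by positivity)

namespace IsEntireCoeff

variable {q : ℕ → ℝ}

lemma summable_abs_mul_pow (hq : IsEntireCoeff q) (R : ℝ) :
    Summable fun m => |q m| * |R| ^ m := by
  simpa only [abs_mul, abs_pow, abs_abs] using (summable_abs_iff.mpr (hq |R|))

lemma hasSum (hq : IsEntireCoeff q) (u : ℝ) :
    HasSum (fun m => q m * u ^ m) (seriesSum q u) :=
  (hq u).hasSum

lemma derivCoeff (hq : IsEntireCoeff q) : IsEntireCoeff (derivCoeff q) := by
  intro u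
  have hR : 1 ≤ |u| + 1 := by linarith [abs_nonneg u]
  refine Summable.of_norm_bounded ((summable_nat_add_iff 1).mpr
    (hq.summable_abs_mul_pow (2 * (|u| + 1)))) fun m => ?_
  have hpow := natCast_mul_pow_pred_le hR (le_add_of_nonneg_right zero_le_one) (m + 1)
  simp only [Nat.cast_add, Nat.cast_one, add_tsub_cancel_right] at hpow
  rw [_root_.derivCoeff, Real.norm_eq_abs, abs_mul, abs_mul, abs_pow,
    abs_of_pos (by positivity : (0 : ℝ) < m + 1), abs_of_pos (by positivity : 0 < 2 * (|u| + 1))]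
  calc (m + 1) * |q (m + 1)| * |u| ^ m = |q (m + 1)| * ((m + 1) * |u| ^ m) := by ring
    _ ≤ |q (m + 1)| * (2 * (|u| + 1)) ^ (m + 1) := by gcongr

theorem hasDerivAt_seriesSum (hq : IsEntireCoeff q) (u : ℝ) :
    HasDerivAt (seriesSum q) (seriesSum (_root_.derivCoeff q) u) u := by
  set R := |u| + 1
  have hR : 1 ≤ R := by linarith [abs_nonneg u]
  have hu : u ∈ Ioo (-R) R := abs_lt.mp (lt_add_one _)
  have hbound : ∀ m (y : ℝ), y ∈ Ioo (-R) R →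
      ‖q m * (m * y ^ (m - 1))‖ ≤ |q m| * |2 * R| ^ m := fun m y hy => by
    rw [Real.norm_eq_abs, abs_mul, abs_mul, abs_pow, Nat.abs_cast,
      abs_of_pos (by linarith : (0 : ℝ) < 2 * R)]
    exact mul_le_mul_of_nonneg_left
      (natCast_mul_pow_pred_le hR (abs_lt.mpr hy).le m) (abs_nonneg _)
  have hderiv := hasDerivAt_tsum_of_isPreconnected (hq.summable_abs_mul_pow (2 * R)) isOpen_Ioo
    isPreconnected_Ioo (fun m y _ => (hasDerivAt_pow m y).const_mul (q m)) hbound hu (hq u) hu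
  refine hderiv.congr_deriv ?_
  rw [(Summable.of_norm_bounded (hq.summable_abs_mul_pow (2 * R))
    fun m => hbound m u hu).tsum_eq_zero_add]
  simp [_root_.derivCoeff, seriesSum, mul_comm, mul_left_comm]

lemma hasDerivAt_seriesSum_sq_div_four (hq : IsEntireCoeff q) (y : ℝ) :
    HasDerivAt (fun y : ℝ => seriesSum q (y ^ 2 / 4))
      (seriesSum (_root_.derivCoeff q) (y ^ 2 / 4) * (y / 2)) y := by
  refine ((hq.hasDerivAt_seriesSum _).comp y ((hasDerivAt_pow 2 y).div_const 4)).congr_deriv ?_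
  push_cast
  ring

lemma continuous_seriesSum (hq : IsEntireCoeff q) : Continuous (seriesSum q) :=
  continuous_iff_continuousAt.mpr fun u => (hq.hasDerivAt_seriesSum u).continuousAt

lemma hasSum_natCast_mul (hq : IsEntireCoeff q) (u : ℝ) :
    HasSum (fun m => m * q m * u ^ m) (u * seriesSum (_root_.derivCoeff q) u) := by
  rw [← hasSum_nat_add_iff' 1]
  simpa [_root_.derivCoeff, pow_succ, mul_comm, mul_left_comm, mul_assoc] using
    (hq.derivCoeff.hasSum u).mul_left u

end IsEntireCoeff

section BesselCoeff

variable {ν : ℝ}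

noncomputable def besselCoeff (ν : ℝ) (m : ℕ) : ℝ :=
  (-1) ^ m / (m.factorial * Real.Gamma (m + ν + 1))

lemma natCast_add_add_one_pos (hν : -1 < ν) (m : ℕ) : 0 < (m : ℝ) + ν + 1 := by
  linarith [m.cast_nonneg (α := ℝ)]

lemma besselCoeff_ne_zero (hν : -1 < ν) (m : ℕ) : besselCoeff ν m ≠ 0 := by
  have hΓ : 0 < Real.Gamma (m + ν + 1) := Real.Gamma_pos_of_pos (natCast_add_add_one_pos hν m)
  unfold besselCoeff
  positivity

lemma besselCoeff_eq_neg_mul_derivCoeff (hν : -1 < ν) (m : ℕ) :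
    besselCoeff ν m = -(m + ν + 1) * derivCoeff (besselCoeff ν) m := by
  have hm := natCast_add_add_one_pos hν m
  have hΓ : Real.Gamma (m + ν + 1) ≠ 0 := (Real.Gamma_pos_of_pos hm).ne'
  have hΓ_succ : Real.Gamma ((m + 1 : ℕ) + ν + 1) = (m + ν + 1) * Real.Gamma (m + ν + 1) := by
    rw [← Real.Gamma_add_one hm.ne']; push_cast; ring_nf
  simp only [derivCoeff, besselCoeff, hΓ_succ, Nat.factorial_succ, Nat.cast_mul, pow_succ]
  push_cast
  field_simp

lemma isEntireCoeff_besselCoeff (hν : -1 < ν) : IsEntireCoeff (besselCoeff ν) := by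
  intro u
  set R := |u| + 1
  have hR : 0 < R := by positivity
  have hratio : ∀ m : ℕ, ‖besselCoeff ν (m + 1) * R ^ (m + 1)‖ / ‖besselCoeff ν m * R ^ m‖
      = R / ((m + 1) * (m + ν + 1)) := fun m => by
    have hm := natCast_add_add_one_pos hν m
    have hc := besselCoeff_ne_zero hν (m + 1)
    rw [besselCoeff_eq_neg_mul_derivCoeff hν m, derivCoeff]
    simp only [norm_mul, norm_neg, norm_pow, Real.norm_eq_abs, abs_of_pos hR, abs_of_pos hm,
      abs_of_pos (by positivity : (0 : ℝ) < m + 1)]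
    field_simp
    ring
  have hgrowth : Tendsto (fun m : ℕ => ((m : ℝ) + 1) * (m + ν + 1)) atTop atTop :=
    (tendsto_atTop_add_const_right _ 1 tendsto_natCast_atTop_atTop).atTop_mul_atTop₀
      (tendsto_atTop_add_const_right _ (ν + 1) tendsto_natCast_atTop_atTop |>.congr
        fun m => by ring)
  have hsummable : Summable fun m => besselCoeff ν m * R ^ m :=
    summable_of_ratio_test_tendsto_lt_one zero_lt_one
      (Eventually.of_forall fun m => mul_ne_zero (besselCoeff_ne_zero hν m) (pow_pos hR m).ne')
      ((tendsto_const_nhds.div_atTop hgrowth).congr fun m => (hratio m).symm)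
  refine Summable.of_norm_bounded hsummable.abs fun m => ?_
  rw [Real.norm_eq_abs, abs_mul, abs_mul, abs_pow, abs_pow, abs_of_pos hR]
  gcongr
  linarith

theorem seriesSum_besselCoeff_ode (hν : -1 < ν) (u : ℝ) :
    u * seriesSum (derivCoeff (derivCoeff (besselCoeff ν))) u
      + (ν + 1) * seriesSum (derivCoeff (besselCoeff ν)) u + seriesSum (besselCoeff ν) u = 0 := by
  have hc := isEntireCoeff_besselCoeff hν
  have hsum : HasSum (fun m => besselCoeff ν m * u ^ m)
      (-(u * seriesSum (derivCoeff (derivCoeff (besselCoeff ν))) u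
        + (ν + 1) * seriesSum (derivCoeff (besselCoeff ν)) u)) := by
    have hterm : (fun m => besselCoeff ν m * u ^ m) = fun m =>
        -(m * derivCoeff (besselCoeff ν) m * u ^ m
          + (ν + 1) * (derivCoeff (besselCoeff ν) m * u ^ m)) := funext fun m => by
      rw [besselCoeff_eq_neg_mul_derivCoeff hν m]
      ring
    rw [hterm]
    exact ((hc.derivCoeff.hasSum_natCast_mul u).add
      ((hc.derivCoeff.hasSum u).mul_left (ν + 1))).neg
  linarith [(hc.hasSum u).unique hsum]

end BesselCoeff

section BesselJ

variable {ν y : ℝ}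

lemma besselJ_eq_rpow_mul_seriesSum (hy : 0 < y) :
    besselJ ν y = (y / 2) ^ ν * seriesSum (besselCoeff ν) (y ^ 2 / 4) := by
  rw [besselJ, seriesSum, ← tsum_mul_left]
  refine tsum_congr fun m => ?_
  rw [Real.rpow_add (by positivity), ← Nat.cast_ofNat, ← Nat.cast_mul, Real.rpow_natCast,
    pow_mul, besselCoeff]
  ring

/-- `y J_ν'(y)` for `y > 0`. -/
noncomputable def besselJEuler (ν y : ℝ) : ℝ :=
  (y / 2) ^ ν * (ν * seriesSum (besselCoeff ν) (y ^ 2 / 4)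
    + 2 * (y ^ 2 / 4) * seriesSum (derivCoeff (besselCoeff ν)) (y ^ 2 / 4))

lemma hasDerivAt_half_rpow (hy : 0 < y) :
    HasDerivAt (fun y : ℝ => (y / 2) ^ ν) (ν * (y / 2) ^ ν / y) y := by
  have hy2 : y / 2 ≠ 0 := by positivity
  refine ((Real.hasDerivAt_rpow_const (p := ν) (Or.inl hy2)).comp y
    ((hasDerivAt_id y).div_const 2)).congr_deriv ?_
  rw [Real.rpow_sub_one hy2]
  field_simp

theorem hasDerivAt_besselJ (hν : -1 < ν) (hy : 0 < y) :
    HasDerivAt (besselJ ν) (besselJEuler ν y / y) y := by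
  have hc := isEntireCoeff_besselCoeff hν
  have h := (hasDerivAt_half_rpow (ν := ν) hy).mul (hc.hasDerivAt_seriesSum_sq_div_four y)
  refine (h.congr_deriv ?_).congr_of_eventuallyEq ?_
  · rw [besselJEuler]
    field_simp
    ring
  · filter_upwards [Ioi_mem_nhds hy] with t ht using besselJ_eq_rpow_mul_seriesSum ht

theorem hasDerivAt_besselJEuler (hν : -1 < ν) (hy : 0 < y) :
    HasDerivAt (besselJEuler ν) ((ν ^ 2 - y ^ 2) * besselJ ν y / y) y := by
  have hc := isEntireCoeff_besselCoeff hν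
  have h := (hasDerivAt_half_rpow (ν := ν) hy).mul
    (((hc.hasDerivAt_seriesSum_sq_div_four y).const_mul ν).add
      ((((hasDerivAt_pow 2 y).div_const 4).const_mul 2).mul
        (hc.derivCoeff.hasDerivAt_seriesSum_sq_div_four y)))
  refine h.congr_deriv ?_
  have hode := seriesSum_besselCoeff_ode hν (y ^ 2 / 4)
  simp only [Pi.add_apply, Pi.mul_apply]
  rw [besselJ_eq_rpow_mul_seriesSum hy]
  push_cast
  field_simp
  linear_combination 8 * y ^ 2 * hode

/-- The closed form of `(y² - ν²) J_ν(y)² + (y J_ν'(y))²`, which extends continuously to `y = 0`. -/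
noncomputable def lommelPrimitive (ν y : ℝ) : ℝ :=
  4 * ((y / 2) ^ (ν + 1)) ^ 2 * (seriesSum (besselCoeff ν) (y ^ 2 / 4) ^ 2
    + ν * seriesSum (besselCoeff ν) (y ^ 2 / 4) * seriesSum (derivCoeff (besselCoeff ν)) (y ^ 2 / 4)
    + y ^ 2 / 4 * seriesSum (derivCoeff (besselCoeff ν)) (y ^ 2 / 4) ^ 2)

lemma lommelPrimitive_eq (hy : 0 < y) :
    lommelPrimitive ν y = (y ^ 2 - ν ^ 2) * besselJ ν y ^ 2 + besselJEuler ν y ^ 2 := by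
  rw [lommelPrimitive, besselJEuler, besselJ_eq_rpow_mul_seriesSum hy,
    Real.rpow_add_one (by positivity)]
  ring

lemma lommelPrimitive_zero (hν : -1 < ν) : lommelPrimitive ν 0 = 0 := by
  simp [lommelPrimitive, Real.zero_rpow (by linarith : ν + 1 ≠ 0)]

lemma continuous_lommelPrimitive (hν : -1 < ν) : Continuous (lommelPrimitive ν) := by
  have hc := isEntireCoeff_besselCoeff hν
  have hpow := Real.continuous_rpow_const (q := ν + 1) (by linarith)
  have h := hc.continuous_seriesSum
  have h' := hc.derivCoeff.continuous_seriesSum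
  unfold lommelPrimitive
  fun_prop

theorem hasDerivAt_lommelPrimitive (hν : -1 < ν) (hy : 0 < y) :
    HasDerivAt (lommelPrimitive ν) (2 * (y * besselJ ν y ^ 2)) y := by
  have h := (((hasDerivAt_pow 2 y).sub_const (ν ^ 2)).mul ((hasDerivAt_besselJ hν hy).pow 2)).add
    ((hasDerivAt_besselJEuler hν hy).pow 2)
  refine (h.congr_deriv ?_).congr_of_eventuallyEq ?_
  · simp only [Pi.pow_apply]
    field_simp
    ring
  · filter_upwards [Ioi_mem_nhds hy] with t ht using lommelPrimitive_eq ht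

theorem two_mul_integral_mul_besselJ_sq (hν : -1 < ν) (hy : 0 < y) :
    2 * ∫ t in (0 : ℝ)..y, t * besselJ ν t ^ 2
      = (y ^ 2 - ν ^ 2) * besselJ ν y ^ 2 + (y * deriv (besselJ ν) y) ^ 2 := by
  have hderiv : ∀ t ∈ Ioo 0 y, HasDerivAt (lommelPrimitive ν) (2 * (t * besselJ ν t ^ 2)) t :=
    fun t ht => hasDerivAt_lommelPrimitive hν ht.1
  have hpos : ∀ t ∈ Ioo 0 y, 0 ≤ 2 * (t * besselJ ν t ^ 2) := fun t ht => by
    have := ht.1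
    positivity
  have hcont := continuous_lommelPrimitive hν
  have hint := intervalIntegral.intervalIntegrable_deriv_of_nonneg hcont.continuousOn
    (by rwa [min_eq_left hy.le, max_eq_right hy.le]) (by rwa [min_eq_left hy.le, max_eq_right hy.le])
  rw [← intervalIntegral.integral_const_mul,
    intervalIntegral.integral_eq_sub_of_hasDerivAt_of_le hy.le hcont.continuousOn hderiv hint,
    lommelPrimitive_zero hν, sub_zero, lommelPrimitive_eq hy, (hasDerivAt_besselJ hν hy).deriv,
    mul_div_cancel₀ _ hy.ne']

end BesselJ

/-- The Lommel-type integral identity for Bessel functions: for `ν > -1`,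
`a > 0`, `x > 0`,
`2a² ∫₀ˣ t J_ν(at)² dt = (a²x² - ν²) J_ν(ax)² + (x (d/dx)[J_ν(ax)])²`. -/
theorem stmt8 (ν a x : ℝ) (hν : -1 < ν) (ha : 0 < a) (hx : 0 < x) :
    2 * a ^ 2 * ∫ t in (0:ℝ)..x, t * (besselJ ν (a * t)) ^ 2
      = (a ^ 2 * x ^ 2 - ν ^ 2) * (besselJ ν (a * x)) ^ 2
        + (x * deriv (fun t : ℝ => besselJ ν (a * t)) x) ^ 2 := by
  have hscale : ∫ t in (0:ℝ)..x, t * besselJ ν (a * t) ^ 2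
      = (a ^ 2)⁻¹ * ∫ t in (0:ℝ)..a * x, t * besselJ ν t ^ 2 := by
    have h := intervalIntegral.integral_comp_mul_left (fun t => t * besselJ ν t ^ 2) ha.ne'
      (a := 0) (b := x)
    rw [mul_zero, smul_eq_mul] at h
    rw [pow_two, mul_inv, mul_assoc, ← h, ← intervalIntegral.integral_const_mul]
    refine intervalIntegral.integral_congr fun t _ => ?_
    field_simp
  rw [hscale, deriv_comp_mul_left, ← mul_assoc, mul_inv_cancel_right₀ (by positivity),
    two_mul_integral_mul_besselJ_sq hν (by positivity), smul_eq_mul]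
  ring
end

section
/- Let 0 < α < 1 and μ > 0. Then for every x ∈ (0,1), the functions θ₊ and θ₋ satisfy the degenerate equation (x^α θ₊'(x))' = −μ² θ₊(x) and (x^α θ₋'(x))' = −μ² θ₋(x); that is, θ₊ and θ₋ are solutions of λ v + (x^α v')' = 0 on (0,1) with λ = μ². -/
open Set

/-- `θ₊(x) = x^{(1-α)/2} J_{ν_α}((2/(2-α)) μ x^{(2-α)/2})`, `ν_α = (1-α)/(2-α)`. -/
noncomputable def thetaP (α μ x : ℝ) : ℝ :=
  x ^ ((1 - α) / 2) * besselJ ((1 - α) / (2 - α)) (2 / (2 - α) * μ * x ^ ((2 - α) / 2))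

/-- `θ₋(x) = x^{(1-α)/2} J_{-ν_α}((2/(2-α)) μ x^{(2-α)/2})`. -/
noncomputable def thetaM (α μ x : ℝ) : ℝ :=
  x ^ ((1 - α) / 2) * besselJ (-((1 - α) / (2 - α))) (2 / (2 - α) * μ * x ^ ((2 - α) / 2))

/-!
Writing `θ(x) = ∑ aₘ x^{s + (2-α)m}`, the operator `v ↦ (xᵅ v')'` sends the `m`-th monomial to
`(s + (2-α)m)(s + (2-α)m - 1 + α) x^{s + (2-α)(m-1)}`. Hence `(xᵅ θ')' = -μ² θ` reduces to the
indicial equation `s (s - 1 + α) = 0`, whose roots `s = 1 - α` and `s = 0` give `θ₊` and `θ₋`, and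
to the recurrence `aₘ₊₁ (s + (2-α)(m+1)) (s + (2-α)m + 1) = -μ² aₘ`, which the Bessel coefficients
satisfy by `Γ(z + 1) = z Γ(z)`. For `α ≤ 1` the recurrence gives `|aₘ| ≤ |a₀| μ^{2m} / (m!)²`, which
justifies differentiating the series term by term twice on `(0, 1)`.
-/

open Real Filter Topology

section RpowSeries

variable {c : ℕ → ℝ} {p q x : ℝ}

theorem rpow_add_le_max_rpow_one {a y r t : ℝ} (ha : 0 < a) (hay : a ≤ y) (hy : y ≤ 1)
    (ht : 0 ≤ t) : y ^ (r + t) ≤ max (a ^ r) 1 := by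
  have hy0 : 0 < y := ha.trans_le hay
  refine (rpow_le_rpow_of_exponent_ge hy0 hy (by linarith)).trans ?_
  rcases le_total r 0 with hr | hr
  · exact (rpow_le_rpow_of_nonpos ha hay hr).trans (le_max_left _ _)
  · exact (rpow_le_one hy0.le hy hr).trans (le_max_right _ _)

theorem summable_mul_rpow_add_mul (hq : 0 ≤ q) (hc : Summable fun m : ℕ => |c m|)
    (hx0 : 0 < x) (hx1 : x ≤ 1) : Summable fun m : ℕ => c m * x ^ (p + q * m) := by
  refine (hc.mul_right (max (x ^ p) 1)).of_norm_bounded fun m => ?_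
  rw [norm_mul, Real.norm_eq_abs, Real.norm_of_nonneg (rpow_nonneg hx0.le _)]
  exact mul_le_mul_of_nonneg_left
    (rpow_add_le_max_rpow_one hx0 le_rfl hx1 (by positivity)) (abs_nonneg _)

theorem hasDerivAt_tsum_mul_rpow_add_mul (hq : 0 ≤ q)
    (hc : Summable fun m : ℕ => |c m| * ((m : ℝ) + 1)) (hx : x ∈ Ioo 0 1) :
    HasDerivAt (fun y => ∑' m : ℕ, c m * y ^ (p + q * m))
      (∑' m : ℕ, c m * (p + q * m) * x ^ (p - 1 + q * m)) x := by
  obtain ⟨hx0, hx1⟩ := hx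
  have hc' : Summable fun m : ℕ => |c m| :=
    hc.of_nonneg_of_le (fun _ => abs_nonneg _) fun m =>
      le_mul_of_one_le_right (abs_nonneg _) (by linarith [m.cast_nonneg (α := ℝ)])
  have hterm : ∀ (m : ℕ), ∀ y ∈ Ioo (x / 2) 1, HasDerivAt (fun y => c m * y ^ (p + q * m))
      (c m * (p + q * m) * y ^ (p - 1 + q * m)) y := by
    intro m y hy
    have hy0 : y ≠ 0 := by linarith [hy.1]
    refine ((hasDerivAt_rpow_const (p := p + q * m) (Or.inl hy0)).const_mul (c m)).congr_deriv ?_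
    rw [show p + q * m - 1 = p - 1 + q * m by ring, mul_assoc]
  have hbound : ∀ (m : ℕ), ∀ y ∈ Ioo (x / 2) 1, ‖c m * (p + q * m) * y ^ (p - 1 + q * m)‖ ≤
      (|p| + q) * max ((x / 2) ^ (p - 1)) 1 * (|c m| * ((m : ℝ) + 1)) := by
    intro m y hy
    have hy0 : 0 < y := by linarith [hy.1]
    have hm : (0 : ℝ) ≤ m := m.cast_nonneg
    have hexp : |p + q * m| ≤ (|p| + q) * ((m : ℝ) + 1) := by
      have := abs_add_le p (q * m)
      rw [abs_of_nonneg (by positivity : 0 ≤ q * m)] at this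
      nlinarith [abs_nonneg p]
    have hpow := rpow_add_le_max_rpow_one (r := p - 1) (t := q * m) (by linarith) hy.1.le hy.2.le
      (by positivity)
    rw [norm_mul, norm_mul, Real.norm_eq_abs, Real.norm_eq_abs,
      Real.norm_of_nonneg (rpow_nonneg hy0.le _)]
    calc |c m| * |p + q * m| * y ^ (p - 1 + q * m)
        ≤ |c m| * ((|p| + q) * ((m : ℝ) + 1)) * max ((x / 2) ^ (p - 1)) 1 := by gcongr
      _ = _ := by ring
  exact hasDerivAt_tsum_of_isPreconnected (hc.mul_left _) isOpen_Ioo isPreconnected_Ioo hterm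
    hbound (y₀ := x) ⟨by linarith, hx1⟩ (summable_mul_rpow_add_mul hq hc' hx0 hx1.le)
    ⟨by linarith, hx1⟩

end RpowSeries

theorem summable_abs_mul_sq_of_abs_succ_mul_sq_le {a : ℕ → ℝ} {C : ℝ}
    (h : ∀ m : ℕ, |a (m + 1)| * ((m : ℝ) + 1) ^ 2 ≤ C * |a m|) :
    Summable fun m : ℕ => |a m| * ((m : ℝ) + 1) ^ 2 := by
  refine summable_of_ratio_norm_eventually_le (r := 1 / 2) (by norm_num) ?_
  obtain ⟨N, hN⟩ := exists_nat_ge (8 * C)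
  filter_upwards [eventually_ge_atTop N] with m hm
  have hk : (N : ℝ) ≤ (m : ℝ) + 1 := by exact_mod_cast hm.trans m.le_succ
  set k : ℝ := (m : ℝ) + 1
  have hk1 : 1 ≤ k := by simp only [k]; linarith [m.cast_nonneg (α := ℝ)]
  rw [Real.norm_of_nonneg (by positivity), Real.norm_of_nonneg (by positivity)]
  push_cast
  rw [show (m : ℝ) + 1 + 1 = k + 1 by rfl]
  refine le_of_mul_le_mul_right ?_ (by positivity : 0 < k ^ 2)
  have hsq : (k + 1) ^ 2 ≤ 4 * k ^ 2 := by nlinarith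
  have hC : 8 * C ≤ k ^ 2 := by nlinarith
  calc |a (m + 1)| * (k + 1) ^ 2 * k ^ 2 ≤ |a (m + 1)| * (4 * k ^ 2) * k ^ 2 := by gcongr
    _ = 4 * k ^ 2 * (|a (m + 1)| * k ^ 2) := by ring
    _ ≤ 4 * k ^ 2 * (C * |a m|) := mul_le_mul_of_nonneg_left (h m) (by positivity)
    _ ≤ 1 / 2 * (|a m| * k ^ 2) * k ^ 2 := by
      nlinarith [mul_nonneg (mul_nonneg (sq_nonneg k) (abs_nonneg (a m))) (sub_nonneg.2 hC)]

section FrobeniusSeries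

variable {α lam s x : ℝ} {A : ℕ → ℝ}

theorem summable_abs_mul_sq_of_frobenius_rec (hα : α ≤ 1) (hs : 0 ≤ s)
    (hrec : ∀ m : ℕ,
      A (m + 1) * ((s + (2 - α) * ((m : ℝ) + 1)) * (s + (2 - α) * m + 1)) = -lam * A m) :
    Summable fun m : ℕ => |A m| * ((m : ℝ) + 1) ^ 2 := by
  refine summable_abs_mul_sq_of_abs_succ_mul_sq_le (C := |lam|) fun m => ?_
  have hm : (0 : ℝ) ≤ m := m.cast_nonneg
  have hd : ((m : ℝ) + 1) ^ 2 ≤ (s + (2 - α) * ((m : ℝ) + 1)) * (s + (2 - α) * m + 1) := by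
    have h1 : (m : ℝ) + 1 ≤ s + (2 - α) * ((m : ℝ) + 1) := by nlinarith
    have h2 : (m : ℝ) + 1 ≤ s + (2 - α) * m + 1 := by nlinarith
    nlinarith
  calc |A (m + 1)| * ((m : ℝ) + 1) ^ 2
      ≤ |A (m + 1)| * ((s + (2 - α) * ((m : ℝ) + 1)) * (s + (2 - α) * m + 1)) := by gcongr
    _ = |lam| * |A m| := by
      rw [← abs_of_nonneg ((sq_nonneg _).trans hd), ← abs_mul, hrec, abs_mul, abs_neg]

theorem hasDerivAt_rpow_mul_deriv_tsum_of_frobenius_rec (hα : α ≤ 1) (hs : 0 ≤ s)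
    (hindicial : s * (s - 1 + α) = 0)
    (hrec : ∀ m : ℕ,
      A (m + 1) * ((s + (2 - α) * ((m : ℝ) + 1)) * (s + (2 - α) * m + 1)) = -lam * A m)
    (hx : x ∈ Ioo 0 1) :
    HasDerivAt (fun y => y ^ α * deriv (fun z => ∑' m : ℕ, A m * z ^ (s + (2 - α) * m)) y)
      (-lam * ∑' m : ℕ, A m * x ^ (s + (2 - α) * m)) x := by
  have hq : 0 ≤ 2 - α := by linarith
  have hA := summable_abs_mul_sq_of_frobenius_rec hα hs hrec
  have hA1 : Summable fun m : ℕ => |A m| * ((m : ℝ) + 1) :=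
    hA.of_nonneg_of_le (fun m => by positivity) fun m => by
      gcongr; nlinarith [m.cast_nonneg (α := ℝ)]
  have hB : Summable fun m : ℕ => |A m * (s + (2 - α) * m)| * ((m : ℝ) + 1) := by
    refine (hA.mul_left (s + 2 - α)).of_nonneg_of_le (fun m => by positivity) fun m => ?_
    have hm : (0 : ℝ) ≤ m := m.cast_nonneg
    have he : s + (2 - α) * m ≤ (s + 2 - α) * ((m : ℝ) + 1) := by nlinarith
    rw [abs_mul, abs_of_nonneg (by positivity : 0 ≤ s + (2 - α) * m)]
    calc |A m| * (s + (2 - α) * m) * ((m : ℝ) + 1)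
        ≤ |A m| * ((s + 2 - α) * ((m : ℝ) + 1)) * ((m : ℝ) + 1) := by gcongr
      _ = _ := by ring
  have hflux : ∀ y ∈ Ioo (0 : ℝ) 1,
      y ^ α * deriv (fun z => ∑' m : ℕ, A m * z ^ (s + (2 - α) * m)) y =
        ∑' m : ℕ, A m * (s + (2 - α) * m) * y ^ (s - 1 + α + (2 - α) * m) := by
    intro y hy
    rw [(hasDerivAt_tsum_mul_rpow_add_mul hq hA1 hy).deriv, ← tsum_mul_left]
    congr 1 with m
    rw [show s - 1 + α + (2 - α) * m = s - 1 + (2 - α) * m + α by ring,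
      rpow_add hy.1 (s - 1 + (2 - α) * m) α]
    ring
  have hsucc : (fun m : ℕ => A (m + 1) * (s + (2 - α) * ((m + 1 : ℕ) : ℝ)) *
        (s - 1 + α + (2 - α) * ((m + 1 : ℕ) : ℝ)) *
          x ^ (s - 1 + α - 1 + (2 - α) * ((m + 1 : ℕ) : ℝ))) =
      fun m : ℕ => -lam * (A m * x ^ (s + (2 - α) * m)) := by
    ext m
    push_cast
    rw [show s - 1 + α - 1 + (2 - α) * ((m : ℝ) + 1) = s + (2 - α) * m by ring,
      show s - 1 + α + (2 - α) * ((m : ℝ) + 1) = s + (2 - α) * m + 1 by ring, mul_assoc (A _),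
      hrec, mul_assoc]
  have hsum := summable_mul_rpow_add_mul (p := s) hq (hA1.of_nonneg_of_le (fun _ => abs_nonneg _)
    fun m => le_mul_of_one_le_right (abs_nonneg _) (by linarith [m.cast_nonneg (α := ℝ)]))
    hx.1 hx.2.le
  refine ((hasDerivAt_tsum_mul_rpow_add_mul (p := s - 1 + α) hq hB hx).congr_of_eventuallyEq
    ?_).congr_deriv ?_
  · filter_upwards [isOpen_Ioo.mem_nhds hx] with y hy using hflux y hy
  · rw [tsum_eq_zero_add' (by rw [hsucc]; exact hsum.mul_left _), hsucc, tsum_mul_left]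
    simp only [Nat.cast_zero, mul_zero, add_zero]
    rw [mul_assoc (A 0), hindicial, mul_zero, zero_mul, zero_add]

end FrobeniusSeries

noncomputable def besselTerm (ν z : ℝ) (m : ℕ) : ℝ :=
  (-1) ^ m / (m.factorial * Gamma (m + ν + 1)) * z ^ (2 * (m : ℝ) + ν)

theorem besselTerm_succ_mul {ν z : ℝ} (hν : -1 < ν) (hz : 0 < z) (m : ℕ) :
    besselTerm ν z (m + 1) * (((m : ℝ) + 1) * (m + ν + 1)) = -z ^ 2 * besselTerm ν z m := by
  have hpos : 0 < (m : ℝ) + ν + 1 := by linarith [m.cast_nonneg (α := ℝ)]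
  have hΓ : Gamma ((m : ℝ) + 1 + ν + 1) = ((m : ℝ) + ν + 1) * Gamma ((m : ℝ) + ν + 1) := by
    rw [← Gamma_add_one hpos.ne']; ring_nf
  have hzpow : z ^ (2 * ((m : ℝ) + 1) + ν) = z ^ (2 * (m : ℝ) + ν) * z ^ 2 := by
    rw [show 2 * ((m : ℝ) + 1) + ν = 2 * (m : ℝ) + ν + (2 : ℕ) by push_cast; ring,
      rpow_add_natCast hz.ne']
  have hΓne := (Gamma_pos_of_pos hpos).ne'
  simp only [besselTerm, Nat.cast_add, Nat.cast_one, hΓ, hzpow, Nat.factorial_succ, Nat.cast_mul]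
  field_simp
  ring

-- `thetaP α μ` and `thetaM α μ` are definitionally `besselTheta α μ (±((1 - α) / (2 - α)))`.
noncomputable def besselTheta (α μ ν x : ℝ) : ℝ :=
  x ^ ((1 - α) / 2) * besselJ ν (2 / (2 - α) * μ * x ^ ((2 - α) / 2))

section BesselTheta

variable {α μ ν s : ℝ}

theorem besselTheta_eq_tsum (hα : α < 2) (hμ : 0 ≤ μ) (hνs : (2 - α) / 2 * ν = s - (1 - α) / 2)
    {y : ℝ} (hy : 0 < y) :
    besselTheta α μ ν y = ∑' m : ℕ, besselTerm ν (μ / (2 - α)) m * y ^ (s + (2 - α) * m) := by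
  have h2α : 0 < 2 - α := by linarith
  rw [besselTheta, besselJ, ← tsum_mul_left]
  congr 1 with m
  rw [show 2 / (2 - α) * μ * y ^ ((2 - α) / 2) / 2 = μ / (2 - α) * y ^ ((2 - α) / 2) by
      field_simp,
    mul_rpow (by positivity) (by positivity), ← rpow_mul hy.le,
    show s + (2 - α) * m = (1 - α) / 2 + (2 - α) / 2 * (2 * m + ν) by linear_combination -hνs,
    rpow_add hy]
  simp only [besselTerm]
  ring

theorem hasDerivAt_rpow_mul_deriv_besselTheta (hα : α < 1) (hμ : 0 < μ) (hs : 0 ≤ s)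
    (hindicial : s * (s - 1 + α) = 0) (hνs : (2 - α) / 2 * ν = s - (1 - α) / 2) {x : ℝ}
    (hx : x ∈ Ioo 0 1) :
    HasDerivAt (fun y => y ^ α * deriv (besselTheta α μ ν) y)
      (-(μ ^ 2) * besselTheta α μ ν x) x := by
  have h2α : 0 < 2 - α := by linarith
  have hν : -1 < ν := by nlinarith
  have hrec (m : ℕ) : besselTerm ν (μ / (2 - α)) (m + 1) *
      ((s + (2 - α) * ((m : ℝ) + 1)) * (s + (2 - α) * m + 1)) =
        -μ ^ 2 * besselTerm ν (μ / (2 - α)) m := by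
    have hfactor : (s + (2 - α) * ((m : ℝ) + 1)) * (s + (2 - α) * m + 1) =
        (2 - α) ^ 2 * (((m : ℝ) + 1) * (m + ν + 1)) := by
      linear_combination hindicial - 2 * (2 - α) * ((m : ℝ) + 1) * hνs
    rw [hfactor, mul_left_comm, besselTerm_succ_mul hν (by positivity)]
    field_simp
  have hseries := hasDerivAt_rpow_mul_deriv_tsum_of_frobenius_rec hα.le hs hindicial hrec hx
  rw [besselTheta_eq_tsum (by linarith) hμ.le hνs hx.1]
  refine hseries.congr_of_eventuallyEq ?_
  filter_upwards [Ioi_mem_nhds hx.1] with y hy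
  rw [Filter.EventuallyEq.deriv_eq]
  filter_upwards [Ioi_mem_nhds hy] with z hz using besselTheta_eq_tsum (by linarith) hμ.le hνs hz

end BesselTheta

theorem stmt10_general (α μ : ℝ) (hα1 : α < 1) (hμ : 0 < μ) :
    ∀ x ∈ Ioo (0:ℝ) 1,
      HasDerivAt (fun y : ℝ => y ^ α * deriv (thetaP α μ) y)
        (-(μ ^ 2) * thetaP α μ x) x ∧
      HasDerivAt (fun y : ℝ => y ^ α * deriv (thetaM α μ) y)
        (-(μ ^ 2) * thetaM α μ x) x := by
  intro x hx
  have h2α : 2 - α ≠ 0 := by linarith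
  exact ⟨hasDerivAt_rpow_mul_deriv_besselTheta (s := 1 - α) hα1 hμ (by linarith) (by ring)
      (by field_simp; ring) hx,
    hasDerivAt_rpow_mul_deriv_besselTheta (s := 0) hα1 hμ le_rfl (by ring)
      (by field_simp; ring) hx⟩

/-- For `0 < α < 1` and `μ > 0`, the functions `θ₊` and `θ₋` solve the
degenerate equation `(xᵅ θ')' = -μ² θ` on `(0,1)`, i.e. they are solutions of
`λ v + (xᵅ v')' = 0` with `λ = μ²`. -/
theorem stmt10 (α μ : ℝ) (hα0 : 0 < α) (hα1 : α < 1) (hμ : 0 < μ) :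
    ∀ x ∈ Ioo (0:ℝ) 1,
      HasDerivAt (fun y : ℝ => y ^ α * deriv (thetaP α μ) y)
        (-(μ ^ 2) * thetaP α μ x) x ∧
      HasDerivAt (fun y : ℝ => y ^ α * deriv (thetaM α μ) y)
        (-(μ ^ 2) * thetaM α μ x) x :=
  stmt10_general α μ hα1 hμ
end

section
/- Let 0 < α < 1 and ν = ν_α = (1−α)/(2−α). There exists a constant c > 0 such that for every μ ≥ 1, ( ∫₀¹ x^{−1} · J_ν((2/(2−α)) μ x^{(2−α)/2})² dx )^{1/2} ≤ c √μ. -/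
/-! Poisson's integral, after the substitution `t = √x`, reads
`J_ν(y) = (y/2)^ν / (Γ(ν+1/2) √π) ∫₀¹ x^(-1/2) (1-x)^(ν-1/2) cos (y √x) dx`
for `ν > -1/2`: expanding the cosine and integrating termwise gives Beta integrals, which
the duplication formula for `Γ` turns into the coefficients of the series of `J_ν`.
Bounding `|cos| ≤ 1` gives `|J_ν(y)| ≤ (y/2)^ν / Γ(ν+1)`, so the integrand is at most a
constant times `μ^(2ν) x^(-α)`, and `μ^(2ν) ≤ μ` because `ν ≤ 1/2`. -/

open MeasureTheory

open Real Set intervalIntegral Nat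
open scoped Interval

theorem Real.Gamma_nat_add_half_mul_factorial (m : ℕ) :
    Gamma (m + 1 / 2) * m ! * 2 ^ (2 * m) = √π * (2 * m)! := by
  have h := Gamma_mul_Gamma_add_half ((m : ℝ) + 1 / 2)
  rw [show (m : ℝ) + 1 / 2 + 1 / 2 = m + 1 by ring, Gamma_nat_eq_factorial,
    show 2 * ((m : ℝ) + 1 / 2) = ((2 * m : ℕ) : ℝ) + 1 by push_cast; ring,
    Gamma_nat_eq_factorial,
    show (1 : ℝ) - (((2 * m : ℕ) : ℝ) + 1) = -((2 * m : ℕ) : ℝ) by ring,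
    rpow_neg zero_le_two, rpow_natCast] at h
  rw [h]
  field_simp

theorem intervalIntegrable_rpow_mul_one_sub_rpow {u v : ℝ} (hu : 0 < u) (hv : 0 < v) :
    IntervalIntegrable (fun x : ℝ ↦ x ^ (u - 1) * (1 - x) ^ (v - 1)) volume 0 1 := by
  have h := Complex.betaIntegral_convergent (u := u) (v := v) (by simpa) (by simpa)
  rw [intervalIntegrable_iff] at h ⊢
  refine IntegrableOn.congr_fun (μ := volume) h.re (fun x hx ↦ ?_) measurableSet_uIoc
  rw [uIoc_of_le zero_le_one] at hx
  norm_cast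
  rw [← Complex.ofReal_cpow hx.1.le, ← Complex.ofReal_cpow (by linarith [hx.2]),
    ← Complex.ofReal_mul, RCLike.re_to_complex, Complex.ofReal_re]

theorem integral_rpow_mul_one_sub_rpow {u v : ℝ} (hu : 0 < u) (hv : 0 < v) :
    ∫ x in (0 : ℝ)..1, x ^ (u - 1) * (1 - x) ^ (v - 1) = Gamma u * Gamma v / Gamma (u + v) := by
  have h := Complex.betaIntegral_convergent (u := u) (v := v) (by simpa) (by simpa)
  rw [← ProbabilityTheory.beta, ProbabilityTheory.beta_eq_betaIntegralReal u v hu hv,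
    Complex.betaIntegral, ← RCLike.re_to_complex, ← intervalIntegral_re h]
  refine integral_congr fun x hx ↦ ?_
  rw [uIcc_of_le zero_le_one] at hx
  norm_cast
  rw [← Complex.ofReal_cpow hx.1, ← Complex.ofReal_cpow (by linarith [hx.2]),
    ← Complex.ofReal_mul, RCLike.re_to_complex, Complex.ofReal_re]

/-- Weight of Poisson's integral for `J_ν`, after the substitution `t = √x` in
`∫₀¹ (1 - t²)^(ν - 1/2) cos (y t) dt`. -/
noncomputable def besselWeight (ν x : ℝ) : ℝ :=
  x ^ (-(1 / 2) : ℝ) * (1 - x) ^ (ν - 1 / 2)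

theorem eqOn_besselWeight_mul_pow (ν : ℝ) (m : ℕ) :
    EqOn (fun x ↦ besselWeight ν x * x ^ m)
      (fun x ↦ x ^ ((m + 1 / 2 : ℝ) - 1) * (1 - x) ^ ((ν + 1 / 2) - 1)) (Ι 0 1) := by
  intro x hx
  rw [uIoc_of_le zero_le_one] at hx
  dsimp only
  rw [besselWeight, mul_right_comm, ← rpow_natCast, ← rpow_add hx.1]
  ring_nf

theorem intervalIntegrable_besselWeight {ν : ℝ} (hν : -(1 / 2) < ν) :
    IntervalIntegrable (besselWeight ν) volume 0 1 := by
  have h := intervalIntegrable_rpow_mul_one_sub_rpow (u := (0 : ℕ) + 1 / 2) (v := ν + 1 / 2)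
    (by norm_num) (by linarith)
  simpa using (intervalIntegrable_congr (eqOn_besselWeight_mul_pow ν 0)).2 h

theorem integral_besselWeight_mul_pow {ν : ℝ} (hν : -(1 / 2) < ν) (m : ℕ) :
    ∫ x in (0 : ℝ)..1, besselWeight ν x * x ^ m
      = Gamma (m + 1 / 2) * Gamma (ν + 1 / 2) / Gamma (m + ν + 1) := by
  rw [integral_congr_ae (ae_of_all _ (eqOn_besselWeight_mul_pow ν m)),
    integral_rpow_mul_one_sub_rpow (by positivity) (by linarith)]
  ring_nf

theorem hasSum_integral_mul_cos_mul_sqrt {w : ℝ → ℝ} (hw : IntervalIntegrable w volume 0 1)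
    (y : ℝ) :
    HasSum (fun m : ℕ ↦ (-1) ^ m * y ^ (2 * m) / (2 * m)! * ∫ x in (0 : ℝ)..1, w x * x ^ m)
      (∫ x in (0 : ℝ)..1, w x * cos (y * √x)) := by
  set F : ℕ → ℝ → ℝ := fun m x ↦ (-1) ^ m * y ^ (2 * m) / (2 * m)! * (w x * x ^ m)
  have hcos : ∀ x ∈ Ioc (0 : ℝ) 1, w x * cos (y * √x) = ∑' m, F m x := by
    intro x hx
    simp only [F, cos_eq_tsum, ← tsum_mul_left, mul_pow, pow_mul, sq_sqrt hx.1.le]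
    exact tsum_congr fun m ↦ by ring
  have hint : ∀ m, Integrable (F m) (volume.restrict (Ioc 0 1)) := fun m ↦
    ((hw.mul_continuousOn (continuousOn_pow m)).const_mul _).1
  have hnorm : ∀ m, ∫ x in Ioc (0 : ℝ) 1, ‖F m x‖
      ≤ |y| ^ (2 * m) / (2 * m)! * ∫ x in Ioc (0 : ℝ) 1, ‖w x‖ := by
    intro m
    rw [← MeasureTheory.integral_const_mul]
    refine integral_mono_of_nonneg (ae_of_all _ fun x ↦ norm_nonneg _)
      (hw.1.norm.const_mul _) ?_
    filter_upwards [ae_restrict_mem measurableSet_Ioc] with x hx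
    simp only [F, norm_mul, norm_div, norm_pow, norm_neg, norm_one, one_pow, one_mul,
      Real.norm_eq_abs, Nat.abs_cast]
    gcongr
    exact mul_le_of_le_one_right (abs_nonneg _)
      (pow_le_one₀ (abs_nonneg x) ((abs_of_pos hx.1).trans_le hx.2))
  have hsum : Summable fun m ↦ ∫ x in Ioc (0 : ℝ) 1, ‖F m x‖ :=
    ((hasSum_cosh |y|).summable.mul_right _).of_nonneg_of_le
      (fun m ↦ integral_nonneg fun x ↦ norm_nonneg _) hnorm
  have h := hasSum_integral_of_summable_integral_norm hint hsum
  simp only [F, MeasureTheory.integral_const_mul] at h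
  rw [integral_of_le zero_le_one, setIntegral_congr_fun measurableSet_Ioc hcos]
  simpa only [integral_of_le zero_le_one] using h

theorem besselJ_eq_integral {ν y : ℝ} (hν : -(1 / 2) < ν) (hy : 0 < y) :
    besselJ ν y = (y / 2) ^ ν / (Gamma (ν + 1 / 2) * √π) *
      ∫ x in (0 : ℝ)..1, besselWeight ν x * cos (y * √x) := by
  rw [← ((hasSum_integral_mul_cos_mul_sqrt (intervalIntegrable_besselWeight hν) y).mul_left
    _).tsum_eq, besselJ]
  refine tsum_congr fun m ↦ ?_
  have hGamma := Gamma_nat_add_half_mul_factorial m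
  have hGamma_m : 0 < Gamma (m + ν + 1) :=
    Gamma_pos_of_pos (by linarith [(m.cast_nonneg : (0 : ℝ) ≤ m)])
  have hGamma_ν : 0 < Gamma (ν + 1 / 2) := Gamma_pos_of_pos (by linarith)
  rw [integral_besselWeight_mul_pow hν m, rpow_add (by positivity),
    show 2 * (m : ℝ) = (2 * m : ℕ) by push_cast; ring, rpow_natCast, div_pow]
  set G := Gamma (ν + 1 / 2)
  set Gm := Gamma (m + 1 / 2)
  field_simp
  rw [← hGamma]
  ring

theorem abs_besselJ_le {ν y : ℝ} (hν : -(1 / 2) < ν) (hy : 0 < y) :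
    |besselJ ν y| ≤ (y / 2) ^ ν / Gamma (ν + 1) := by
  have hw := intervalIntegrable_besselWeight hν
  have hGamma : 0 < Gamma (ν + 1 / 2) := Gamma_pos_of_pos (by linarith)
  have hw_nonneg : ∀ x ∈ Ioc (0 : ℝ) 1, 0 ≤ besselWeight ν x := fun x hx ↦
    mul_nonneg (rpow_nonneg hx.1.le _) (rpow_nonneg (by linarith [hx.2]) _)
  have hint : |∫ x in (0 : ℝ)..1, besselWeight ν x * cos (y * √x)|
      ≤ √π * Gamma (ν + 1 / 2) / Gamma (ν + 1) := by
    have h := integral_besselWeight_mul_pow hν 0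
    simp only [pow_zero, mul_one, CharP.cast_eq_zero, zero_add, Gamma_one_half_eq] at h
    rw [← h, ← Real.norm_eq_abs]
    refine norm_integral_le_of_norm_le zero_le_one (ae_of_all _ fun x hx ↦ ?_) hw
    rw [norm_mul, Real.norm_of_nonneg (hw_nonneg x hx)]
    exact mul_le_of_le_one_right (hw_nonneg x hx) (abs_cos_le_one _)
  rw [besselJ_eq_integral hν hy, abs_mul, abs_of_nonneg (by positivity)]
  calc _ ≤ (y / 2) ^ ν / (Gamma (ν + 1 / 2) * √π) *
        (√π * Gamma (ν + 1 / 2) / Gamma (ν + 1)) := by gcongr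
    _ = (y / 2) ^ ν / Gamma (ν + 1) := by
        set G := Gamma (ν + 1 / 2)
        field_simp

theorem integral_inv_mul_besselJ_sq_le {ν β b : ℝ} (hν : 0 < ν) (hβ : 0 < β) (hb : 0 < b) :
    ∫ x in (0 : ℝ)..1, x⁻¹ * besselJ ν (b * x ^ β) ^ 2
      ≤ ((b / 2) ^ ν / Gamma (ν + 1)) ^ 2 / (2 * β * ν) := by
  set K := (b / 2) ^ ν / Gamma (ν + 1)
  have hpoint : ∀ x ∈ Ioc (0 : ℝ) 1,
      x⁻¹ * besselJ ν (b * x ^ β) ^ 2 ≤ K ^ 2 * x ^ (2 * β * ν - 1) := by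
    intro x hx
    have hJ := abs_besselJ_le (ν := ν) (by linarith) (mul_pos hb (rpow_pos_of_pos hx.1 β))
    rw [show b * x ^ β / 2 = b / 2 * x ^ β by ring,
      mul_rpow (by positivity) (rpow_nonneg hx.1.le _), ← rpow_mul hx.1.le,
      mul_div_right_comm] at hJ
    calc x⁻¹ * besselJ ν (b * x ^ β) ^ 2 ≤ x⁻¹ * (K * x ^ (β * ν)) ^ 2 :=
          mul_le_mul_of_nonneg_left (sq_le_sq' (abs_le.1 hJ).1 (abs_le.1 hJ).2)
            (inv_nonneg.2 hx.1.le)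
      _ = K ^ 2 * x ^ (2 * β * ν - 1) := by
          rw [rpow_sub_one hx.1.ne', mul_pow, ← rpow_mul_natCast hx.1.le]
          ring_nf
  have hint : IntervalIntegrable (fun x : ℝ ↦ K ^ 2 * x ^ (2 * β * ν - 1)) volume 0 1 :=
    (intervalIntegrable_rpow' (by nlinarith)).const_mul _
  calc ∫ x in (0 : ℝ)..1, x⁻¹ * besselJ ν (b * x ^ β) ^ 2
      ≤ ∫ x in (0 : ℝ)..1, K ^ 2 * x ^ (2 * β * ν - 1) := by
        rw [integral_of_le zero_le_one, integral_of_le zero_le_one]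
        refine integral_mono_of_nonneg ?_ hint.1 ?_ <;>
          filter_upwards [ae_restrict_mem measurableSet_Ioc] with x hx
        · have := inv_nonneg.2 hx.1.le
          positivity
        · exact hpoint x hx
    _ = K ^ 2 / (2 * β * ν) := by
        rw [intervalIntegral.integral_const_mul, integral_rpow (.inl (by nlinarith)),
          sub_add_cancel, zero_rpow (by positivity), one_rpow]
        ring

/-- With `ν = (1-α)/(2-α)`, there is `c > 0` such that for all `μ ≥ 1`,
`(∫₀¹ x⁻¹ J_ν((2/(2-α)) μ x^{(2-α)/2})² dx)^{1/2} ≤ c √μ`. -/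
theorem stmt16 (α : ℝ) (hα0 : 0 < α) (hα1 : α < 1) :
    ∃ c > 0, ∀ μ : ℝ, 1 ≤ μ →
      Real.sqrt (∫ x in (0:ℝ)..1,
          x⁻¹ * (besselJ ((1 - α) / (2 - α)) (2 / (2 - α) * μ * x ^ ((2 - α) / 2))) ^ 2)
        ≤ c * Real.sqrt μ := by
  have h2α : 0 < 2 - α := by linarith
  set ν := (1 - α) / (2 - α)
  set a := 2 / (2 - α)
  have hν : 0 < ν := div_pos (by linarith) h2α
  have hν_le : ν ≤ 1 / 2 := by rw [div_le_iff₀ h2α]; linarith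
  have ha : 0 < a := div_pos two_pos h2α
  have hexp : 2 * ((2 - α) / 2) * ν = 1 - α := by simp only [ν]; field_simp
  refine ⟨(a / 2) ^ ν / Gamma (ν + 1) / √(1 - α), ?_, fun μ hμ ↦ ?_⟩
  · have := Gamma_pos_of_pos (by linarith : 0 < ν + 1)
    have := sqrt_pos.2 (by linarith : 0 < 1 - α)
    positivity
  have h := integral_inv_mul_besselJ_sq_le hν (by positivity : 0 < (2 - α) / 2)
    (by positivity : 0 < a * μ)
  rw [hexp] at h
  calc _ ≤ √(((a * μ / 2) ^ ν / Gamma (ν + 1)) ^ 2 / (1 - α)) := sqrt_le_sqrt h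
    _ = (a / 2) ^ ν / Gamma (ν + 1) / √(1 - α) * μ ^ ν := by
        rw [sqrt_div' _ (by linarith), sqrt_sq (by positivity), mul_div_right_comm,
          mul_rpow (by positivity) (by positivity)]
        ring
    _ ≤ _ := by
        gcongr
        rw [sqrt_eq_rpow]
        exact rpow_le_rpow_of_exponent_le hμ hν_le
end
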